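/- arXiv:2502.06506 — 9 statements merged into one kernel-verified Lean document; each statement's English description precedes it below -/
import Mathlib

section
/- For every natural number n ≥ 1, every real γ ≥ 1, and real numbers x₁ ≥ x₂ ≥ ⋯ ≥ xₙ ≥ 0, the alternating sum satisfies (∑_{i=1}^{n} (-1)^{i-1} xᵢ)^γ ≤ ∑_{i=1}^{n} (-1)^{i-1} xᵢ^γ. -/
/-!
Write the alternating sum as `x₀ - x₁ + T`, where `T` is the alternating sum of `x₂, x₃, …`.
An alternating sum of a nonincreasing nonnegative sequence is nonnegative; applied to `x₂, x₃, …`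
and to `x₁, x₂, …` this gives `0 ≤ T ≤ x₁`. For a convex `f` the increment
`t ↦ f (t + c) - f t` is monotone when `c ≥ 0`, so `f (T + (x₀ - x₁)) - f T ≤ f x₀ - f x₁`, and
induction bounds `f T`. The theorem is the case `f t = t ^ γ`.
-/

open Finset

section Ring

variable {R : Type*} [Ring R]

theorem Fin.sum_alternating_succ {n : ℕ} (x : Fin (n + 1) → R) :
    ∑ i : Fin (n + 1), (-1 : R) ^ (i : ℕ) * x i =
      x 0 - ∑ i : Fin n, (-1 : R) ^ (i : ℕ) * x i.succ := by
  simp [Fin.sum_univ_succ, pow_succ, sub_eq_add_neg, ← Finset.sum_neg_distrib]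

theorem Fin.sum_alternating_succ_succ {n : ℕ} (x : Fin (n + 2) → R) :
    ∑ i : Fin (n + 2), (-1 : R) ^ (i : ℕ) * x i =
      x 0 - x 1 + ∑ i : Fin n, (-1 : R) ^ (i : ℕ) * x i.succ.succ := by
  rw [Fin.sum_alternating_succ, Fin.sum_alternating_succ]
  simp only [Fin.succ_zero_eq_one]
  abel

end Ring

theorem Antitone.comp_fin_succ {α : Type*} [Preorder α] {n : ℕ} {x : Fin (n + 1) → α}
    (hx : Antitone x) : Antitone fun i : Fin n ↦ x i.succ :=
  hx.comp_monotone (Fin.strictMono_succ.monotone)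

section

variable {𝕜 : Type*} [Field 𝕜] [LinearOrder 𝕜] [IsStrictOrderedRing 𝕜]

theorem ConvexOn.map_add_sub_map_le {s : Set 𝕜} {f : 𝕜 → 𝕜} (hf : ConvexOn 𝕜 s f)
    {a b c : 𝕜} (ha : a ∈ s) (hbc : b + c ∈ s) (hab : a ≤ b) (hc : 0 ≤ c) :
    f (a + c) - f a ≤ f (b + c) - f b := by
  rcases hc.eq_or_lt with rfl | hc
  · simp
  rcases hab.eq_or_lt with rfl | hab
  · rfl
  have hac : a + c ∈ s := hf.1.ordConnected.out ha hbc ⟨by linarith, by linarith⟩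
  have hb : b ∈ s := hf.1.ordConnected.out ha hbc ⟨hab.le, by linarith⟩
  rw [← div_le_div_iff_of_pos_right hc]
  calc (f (a + c) - f a) / c = (f (a + c) - f a) / (a + c - a) := by ring
    _ ≤ (f (b + c) - f a) / (b + c - a) :=
      hf.secant_mono ha hac hbc (by linarith) (by linarith) (by linarith)
    _ = (f a - f (b + c)) / (a - (b + c)) := by rw [← neg_div_neg_eq, neg_sub, neg_sub]
    _ ≤ (f b - f (b + c)) / (b - (b + c)) :=
      hf.secant_mono hbc ha hb (by linarith) (by linarith) hab.le
    _ = (f (b + c) - f b) / c := by rw [← neg_div_neg_eq, neg_sub, neg_sub, add_sub_cancel_left]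

theorem Antitone.sum_alternating_nonneg :
    ∀ {n : ℕ} {x : Fin n → 𝕜}, Antitone x → (∀ i, 0 ≤ x i) →
      0 ≤ ∑ i : Fin n, (-1 : 𝕜) ^ (i : ℕ) * x i
  | 0, _, _, _ => by simp
  | 1, x, _, hx₀ => by simpa using hx₀ 0
  | _ + 2, x, hx, hx₀ => by
    rw [Fin.sum_alternating_succ_succ]
    have htail := hx.comp_fin_succ.comp_fin_succ.sum_alternating_nonneg fun i ↦ hx₀ _
    have h01 : x 1 ≤ x 0 := hx (Fin.zero_le 1)
    linarith

theorem ConvexOn.map_sum_alternating_le {f : 𝕜 → 𝕜} (hf : ConvexOn 𝕜 (Set.Ici 0) f)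
    (hf₀ : f 0 ≤ 0) :
    ∀ {n : ℕ} {x : Fin n → 𝕜}, Antitone x → (∀ i, 0 ≤ x i) →
      f (∑ i : Fin n, (-1 : 𝕜) ^ (i : ℕ) * x i) ≤ ∑ i : Fin n, (-1 : 𝕜) ^ (i : ℕ) * f (x i)
  | 0, _, _, _ => by simpa using hf₀
  | 1, x, _, _ => by simp
  | _ + 2, x, hx, hx₀ => by
    set T := ∑ i : Fin _, (-1 : 𝕜) ^ (i : ℕ) * x i.succ.succ
    have hT₀ : 0 ≤ T := hx.comp_fin_succ.comp_fin_succ.sum_alternating_nonneg fun i ↦ hx₀ _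
    have hT₁ : T ≤ x 1 := by
      have := hx.comp_fin_succ.sum_alternating_nonneg fun i ↦ hx₀ _
      rw [Fin.sum_alternating_succ] at this
      simpa using this
    have h01 : x 1 ≤ x 0 := hx (Fin.zero_le 1)
    have hinc := hf.map_add_sub_map_le hT₀ (by simpa using hx₀ 0) hT₁ (sub_nonneg.2 h01)
    have IH := hf.map_sum_alternating_le hf₀ hx.comp_fin_succ.comp_fin_succ fun i ↦ hx₀ _
    rw [Fin.sum_alternating_succ_succ, Fin.sum_alternating_succ_succ (fun i ↦ f (x i))]
    rw [add_sub_cancel] at hinc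
    calc f (x 0 - x 1 + T) = f (T + (x 0 - x 1)) := by rw [add_comm]
      _ ≤ f (x 0) - f (x 1) + f T := by linarith
      _ ≤ _ := by gcongr

end

theorem alternating_sum_rpow_le_general (n : ℕ) (γ : ℝ) (hγ : 1 ≤ γ)
    (x : Fin n → ℝ) (hanti : ∀ i j : Fin n, i ≤ j → x j ≤ x i)
    (hnonneg : ∀ i, 0 ≤ x i) :
    (∑ i : Fin n, (-1 : ℝ) ^ (i : ℕ) * x i) ^ γ ≤
      ∑ i : Fin n, (-1 : ℝ) ^ (i : ℕ) * x i ^ γ :=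
  (convexOn_rpow hγ).map_sum_alternating_le (by simp [Real.zero_rpow (by linarith : γ ≠ 0)])
    (fun i j ↦ hanti i j) hnonneg

/-- For `n ≥ 1`, `γ ≥ 1` and reals `x₁ ≥ x₂ ≥ ⋯ ≥ xₙ ≥ 0`, the alternating sum
satisfies `(∑ (-1)^(i-1) xᵢ) ^ γ ≤ ∑ (-1)^(i-1) xᵢ ^ γ`. -/
theorem alternating_sum_rpow_le (n : ℕ) (hn : 1 ≤ n) (γ : ℝ) (hγ : 1 ≤ γ)
    (x : Fin n → ℝ) (hanti : ∀ i j : Fin n, i ≤ j → x j ≤ x i)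
    (hnonneg : ∀ i, 0 ≤ x i) :
    (∑ i : Fin n, (-1 : ℝ) ^ (i : ℕ) * x i) ^ γ ≤
      ∑ i : Fin n, (-1 : ℝ) ^ (i : ℕ) * x i ^ γ :=
  alternating_sum_rpow_le_general n γ hγ x hanti hnonneg
end

section
/- Let p ≥ 1 and let E ⊆ (0, ∞) be a measurable set of finite Lebesgue measure. Then ∫₀^∞ χ_E(t) dt ≤ p^{1/p} (∫₀^∞ χ_E(t) t^{p-1} dt)^{1/p}. -/
open MeasureTheory Set ENNReal

/-! Bathtub principle: since `t ↦ t ^ (p - 1)` is nondecreasing for `p ≥ 1`, among the subsets of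
`(0, ∞)` of measure at least `m` the interval `(0, m]` has the least weighted measure
`∫₀^m t ^ (p - 1) dt = m ^ p / p`. Hence `m ^ p ≤ p ∫_E t ^ (p - 1) dt` for every
`m < |E ∩ (0, ∞)|`. -/

theorem measure_sdiff_le_measure_sdiff_of_le {α : Type*} [MeasurableSpace α] {μ : Measure α}
    {s t : Set α} (hs : NullMeasurableSet s μ) (ht : NullMeasurableSet t μ) (h : μ s ≤ μ t)
    (hfin : μ (s ∩ t) ≠ ∞) : μ (s \ t) ≤ μ (t \ s) := by
  rwa [← ENNReal.add_le_add_iff_left hfin, measure_inter_add_sdiff₀ _ ht, inter_comm,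
    measure_inter_add_sdiff₀ _ hs]

theorem setLIntegral_Ioc_le_setLIntegral_of_monotoneOn {f : ℝ → ℝ≥0∞} (hf : MonotoneOn f (Ici 0))
    (hf_meas : Measurable f) {E : Set ℝ} (hE : MeasurableSet E) (hE_pos : E ⊆ Ioi 0) {m : ℝ}
    (hm : 0 ≤ m) (hmE : ENNReal.ofReal m ≤ volume E) :
    ∫⁻ t in Ioc 0 m, f t ≤ ∫⁻ t in E, f t := by
  have h_sdiff : volume (Ioc 0 m \ E) ≤ volume (E \ Ioc 0 m) :=
    measure_sdiff_le_measure_sdiff_of_le measurableSet_Ioc.nullMeasurableSet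
      hE.nullMeasurableSet (by rwa [Real.volume_Ioc, sub_zero])
      (measure_mono inter_subset_left |>.trans_lt measure_Ioc_lt_top).ne
  have h_below : ∫⁻ t in Ioc 0 m \ E, f t ≤ f m * volume (Ioc 0 m \ E) := by
    rw [← setLIntegral_const]
    exact setLIntegral_mono measurable_const fun t ht ↦
      hf (Ioi_subset_Ici_self ht.1.1) hm ht.1.2
  have h_above : f m * volume (E \ Ioc 0 m) ≤ ∫⁻ t in E \ Ioc 0 m, f t := by
    rw [← setLIntegral_const]
    refine setLIntegral_mono hf_meas fun t ht ↦ hf hm (Ioi_subset_Ici_self (hE_pos ht.1)) ?_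
    by_contra! htm
    exact ht.2 ⟨hE_pos ht.1, htm.le⟩
  have h_sdiff_lintegral : ∫⁻ t in Ioc 0 m \ E, f t ≤ ∫⁻ t in E \ Ioc 0 m, f t :=
    calc ∫⁻ t in Ioc 0 m \ E, f t
        ≤ f m * volume (Ioc 0 m \ E) := h_below
      _ ≤ f m * volume (E \ Ioc 0 m) := by gcongr
      _ ≤ ∫⁻ t in E \ Ioc 0 m, f t := h_above
  calc ∫⁻ t in Ioc 0 m, f t
      = (∫⁻ t in Ioc 0 m ∩ E, f t) + ∫⁻ t in Ioc 0 m \ E, f t :=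
        (lintegral_inter_add_sdiff f _ hE).symm
    _ ≤ (∫⁻ t in E ∩ Ioc 0 m, f t) + ∫⁻ t in E \ Ioc 0 m, f t := by
        rw [inter_comm]
        exact add_le_add le_rfl h_sdiff_lintegral
    _ = ∫⁻ t in E, f t := lintegral_inter_add_sdiff f _ measurableSet_Ioc

theorem setLIntegral_Ioc_zero_ofReal_rpow_sub_one {p : ℝ} (hp : 0 < p) {m : ℝ} (hm : 0 ≤ m) :
    ∫⁻ t in Ioc 0 m, ENNReal.ofReal (t ^ (p - 1)) = ENNReal.ofReal (m ^ p / p) := by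
  have h_exp : -1 < p - 1 := by linarith
  rw [← ofReal_integral_eq_lintegral_ofReal
    (intervalIntegral.intervalIntegrable_rpow' h_exp).1
    (ae_restrict_of_forall_mem measurableSet_Ioc fun t ht ↦ Real.rpow_nonneg ht.1.le _),
    ← intervalIntegral.integral_of_le hm, integral_rpow (.inl h_exp), sub_add_cancel,
    Real.zero_rpow hp.ne', sub_zero]

theorem ofReal_rpow_div_le_setLIntegral_ofReal_rpow_sub_one {p : ℝ} (hp : 1 ≤ p) {E : Set ℝ}
    (hE : MeasurableSet E) (hE_pos : E ⊆ Ioi 0) {m : ℝ} (hm : 0 ≤ m)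
    (hmE : ENNReal.ofReal m ≤ volume E) :
    ENNReal.ofReal (m ^ p / p) ≤ ∫⁻ t in E, ENNReal.ofReal (t ^ (p - 1)) := by
  rw [← setLIntegral_Ioc_zero_ofReal_rpow_sub_one (by linarith) hm]
  exact setLIntegral_Ioc_le_setLIntegral_of_monotoneOn
    (ENNReal.ofReal_mono.comp_monotoneOn
      (Real.monotoneOn_rpow_Ici_of_exponent_nonneg (by linarith)))
    (by fun_prop) hE hE_pos hm hmE

theorem Real.rpow_one_div_mul_rpow_div_rpow_one_div {p : ℝ} (hp : 0 < p) {m : ℝ} (hm : 0 ≤ m) :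
    p ^ (1 / p) * (m ^ p / p) ^ (1 / p) = m := by
  rw [Real.div_rpow (by positivity) hp.le, ← Real.rpow_mul hm, mul_one_div_cancel hp.ne',
    Real.rpow_one, mul_div_cancel₀ _ (by positivity)]

theorem indicator_lintegral_le_rpow_general (p : ℝ) (hp : 1 ≤ p) (E : Set ℝ)
    (hE : MeasurableSet E) :
    (∫⁻ t in Ioi (0 : ℝ), E.indicator (fun _ => (1 : ℝ≥0∞)) t) ≤
      ENNReal.ofReal (p ^ (1 / p)) *
        (∫⁻ t in Ioi (0 : ℝ),
            E.indicator (fun _ => (1 : ℝ≥0∞)) t * ENNReal.ofReal (t ^ (p - 1))) ^ (1 / p) := by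
  have hp_pos : 0 < p := by linarith
  simp_rw [← indicator_mul_left _ (fun _ ↦ (1 : ℝ≥0∞)) fun t ↦ ENNReal.ofReal (t ^ (p - 1)),
    one_mul]
  rw [lintegral_indicator hE, lintegral_indicator hE, Measure.restrict_restrict hE,
    setLIntegral_one]
  refine le_of_forall_lt_imp_le_of_dense fun c hc ↦ ?_
  obtain ⟨m, hm, rfl⟩ : ∃ m, 0 ≤ m ∧ ENNReal.ofReal m = c :=
    ⟨c.toReal, toReal_nonneg, ofReal_toReal hc.ne_top⟩
  calc ENNReal.ofReal m
      = ENNReal.ofReal (p ^ (1 / p)) * ENNReal.ofReal (m ^ p / p) ^ (1 / p) := by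
        rw [ofReal_rpow_of_nonneg (by positivity) (by positivity), ← ofReal_mul (by positivity),
          Real.rpow_one_div_mul_rpow_div_rpow_one_div hp_pos hm]
    _ ≤ _ := by
        gcongr
        exact ofReal_rpow_div_le_setLIntegral_ofReal_rpow_sub_one hp
          (hE.inter measurableSet_Ioi) inter_subset_right hm hc.le

/-- For `p ≥ 1` and a measurable set `E ⊆ (0, ∞)` of finite Lebesgue measure,
`∫₀^∞ χ_E(t) dt ≤ p^{1/p} (∫₀^∞ χ_E(t) t^{p-1} dt)^{1/p}`. -/
theorem indicator_lintegral_le_rpow (p : ℝ) (hp : 1 ≤ p) (E : Set ℝ)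
    (hE : MeasurableSet E) (hE' : E ⊆ Ioi 0) (hfin : volume E < ⊤) :
    (∫⁻ t in Ioi (0 : ℝ), E.indicator (fun _ => (1 : ℝ≥0∞)) t) ≤
      ENNReal.ofReal (p ^ (1 / p)) *
        (∫⁻ t in Ioi (0 : ℝ),
            E.indicator (fun _ => (1 : ℝ≥0∞)) t * ENNReal.ofReal (t ^ (p - 1))) ^ (1 / p) :=
  indicator_lintegral_le_rpow_general p hp E hE
end

section
/- Let p ≥ 1, γ > 0, and let E ⊆ (0, ∞) be a measurable set of finite Lebesgue measure. Then ∫₀^∞ χ_E(t) t^{γ-1} dt ≤ p^{1/p} γ^{-1/p'} (∫₀^∞ χ_E(t) t^{pγ - 1} dt)^{1/p}, where 1/p + 1/p' = 1. -/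
/-!
Bathtub principle. Among sets `E ⊆ (0, ∞)` with a given value `I` of `∫_E t^{pγ-1} dt`, the
integral `∫_E t^{γ-1} dt` is largest for the initial interval `(0, a]` with `a^{pγ}/(pγ) = I`:
since `p ≥ 1`, the ratio `t^{γ-1} / t^{pγ-1} = t^{γ-pγ}` is non-increasing, so trading the part
of `E` beyond `a` for the part of `(0, a]` that `E` misses (of equal weight `t^{pγ-1} dt`) can only
increase the integral. For the interval both integrals are explicit, and `a^γ/γ` equals
`p^{1/p} γ^{-1/p'} I^{1/p}`.
-/

open MeasureTheory Set ENNReal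

section SetLIntegral

variable {α : Type*} [MeasurableSpace α] {μ : Measure α} {f g : α → ℝ≥0∞} {E A : Set α}

theorem setLIntegral_le_of_setLIntegral_le (hE : MeasurableSet E) (hA : MeasurableSet A)
    {c : ℝ≥0∞} (hc : c ≠ ∞) (hgE : ∫⁻ x in E, g x ∂μ ≠ ∞)
    (hg : ∫⁻ x in E, g x ∂μ ≤ ∫⁻ x in A, g x ∂μ)
    (hout : ∀ x ∈ E \ A, f x ≤ c * g x) (hin : ∀ x ∈ A \ E, c * g x ≤ f x) :
    ∫⁻ x in E, f x ∂μ ≤ ∫⁻ x in A, f x ∂μ := by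
  have hg_diff : ∫⁻ x in E \ A, g x ∂μ ≤ ∫⁻ x in A \ E, g x ∂μ := by
    have hfin : ∫⁻ x in E ∩ A, g x ∂μ ≠ ∞ :=
      ne_top_of_le_ne_top hgE (lintegral_mono_set inter_subset_left)
    rw [← ENNReal.add_le_add_iff_left hfin]
    calc ∫⁻ x in E ∩ A, g x ∂μ + ∫⁻ x in E \ A, g x ∂μ = ∫⁻ x in E, g x ∂μ :=
          lintegral_inter_add_sdiff g E hA
      _ ≤ ∫⁻ x in A, g x ∂μ := hg
      _ = ∫⁻ x in E ∩ A, g x ∂μ + ∫⁻ x in A \ E, g x ∂μ := by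
          rw [inter_comm, lintegral_inter_add_sdiff g A hE]
  calc ∫⁻ x in E, f x ∂μ = ∫⁻ x in E ∩ A, f x ∂μ + ∫⁻ x in E \ A, f x ∂μ :=
        (lintegral_inter_add_sdiff f E hA).symm
    _ ≤ ∫⁻ x in E ∩ A, f x ∂μ + c * ∫⁻ x in E \ A, g x ∂μ := by
        rw [← lintegral_const_mul' _ _ hc]
        exact add_le_add le_rfl (setLIntegral_mono' (hE.diff hA) hout)
    _ ≤ ∫⁻ x in E ∩ A, f x ∂μ + c * ∫⁻ x in A \ E, g x ∂μ := by gcongr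
    _ ≤ ∫⁻ x in E ∩ A, f x ∂μ + ∫⁻ x in A \ E, f x ∂μ := by
        rw [← lintegral_const_mul' _ _ hc]
        exact add_le_add le_rfl (setLIntegral_mono' (hA.diff hE) hin)
    _ = ∫⁻ x in A, f x ∂μ := by rw [inter_comm, lintegral_inter_add_sdiff f A hE]

theorem measure_eq_zero_of_setLIntegral_eq_zero (hg : Measurable g) (hpos : ∀ x ∈ E, g x ≠ 0)
    (h : ∫⁻ x in E, g x ∂μ = 0) : μ E = 0 := by
  have hsupp : Function.support g ∩ E = E := inter_eq_self_of_subset_right hpos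
  rw [← hsupp, ← nonpos_iff_eq_zero, ← not_lt, ← setLIntegral_pos_iff hg, h]
  exact lt_irrefl 0

end SetLIntegral

theorem lintegral_indicator_one_mul {α : Type*} [MeasurableSpace α] {μ : Measure α}
    {E s : Set α} (hE : MeasurableSet E) (hEs : E ⊆ s) (f : α → ℝ≥0∞) :
    ∫⁻ x in s, E.indicator (fun _ => (1 : ℝ≥0∞)) x * f x ∂μ = ∫⁻ x in E, f x ∂μ := by
  simp_rw [← indicator_mul_left, one_mul]
  rw [lintegral_indicator hE, Measure.restrict_restrict hE, inter_eq_self_of_subset_left hEs]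

namespace Real

theorem rpow_sub_one_le_mul_rpow_sub_one {r s a t : ℝ} (hrs : r ≤ s) (ha : 0 < a) (hat : a ≤ t) :
    t ^ (r - 1) ≤ a ^ (r - s) * t ^ (s - 1) := by
  have ht : 0 < t := ha.trans_le hat
  calc t ^ (r - 1) = t ^ (r - s) * t ^ (s - 1) := by rw [← rpow_add ht]; ring_nf
    _ ≤ a ^ (r - s) * t ^ (s - 1) := by
        gcongr ?_ * _
        exact rpow_le_rpow_of_nonpos ha hat (by linarith : r - s ≤ 0)

theorem mul_rpow_sub_one_le_rpow_sub_one {r s a t : ℝ} (hrs : r ≤ s) (ht : 0 < t) (hta : t ≤ a) :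
    a ^ (r - s) * t ^ (s - 1) ≤ t ^ (r - 1) := by
  calc a ^ (r - s) * t ^ (s - 1) ≤ t ^ (r - s) * t ^ (s - 1) := by
        gcongr ?_ * _
        exact rpow_le_rpow_of_nonpos ht hta (by linarith : r - s ≤ 0)
    _ = t ^ (r - 1) := by rw [← rpow_add ht]; ring_nf

end Real

theorem lintegral_Ioc_rpow_sub_one {c : ℝ} (hc : 0 < c) {a : ℝ} (ha : 0 ≤ a) :
    ∫⁻ t in Ioc (0 : ℝ) a, ENNReal.ofReal (t ^ (c - 1)) = ENNReal.ofReal (a ^ c / c) := by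
  have hint : IntegrableOn (fun t : ℝ => t ^ (c - 1)) (Ioc 0 a) :=
    (intervalIntegral.intervalIntegrable_rpow' (by linarith)).1
  rw [← ofReal_integral_eq_lintegral_ofReal hint
    ((ae_restrict_iff' measurableSet_Ioc).2 (ae_of_all _ fun t ht => Real.rpow_nonneg ht.1.le _)),
    ← intervalIntegral.integral_of_le ha, integral_rpow (Or.inl (by linarith)),
    sub_add_cancel, Real.zero_rpow hc.ne', sub_zero]

theorem setLIntegral_rpow_sub_one_le_Ioc {r s a : ℝ} (hrs : r ≤ s) (ha : 0 < a) {E : Set ℝ}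
    (hE : MeasurableSet E) (hE' : E ⊆ Ioi 0)
    (hfin : ∫⁻ t in E, ENNReal.ofReal (t ^ (s - 1)) ≠ ∞)
    (h : ∫⁻ t in E, ENNReal.ofReal (t ^ (s - 1)) ≤
      ∫⁻ t in Ioc 0 a, ENNReal.ofReal (t ^ (s - 1))) :
    ∫⁻ t in E, ENNReal.ofReal (t ^ (r - 1)) ≤ ∫⁻ t in Ioc 0 a, ENNReal.ofReal (t ^ (r - 1)) := by
  refine setLIntegral_le_of_setLIntegral_le hE measurableSet_Ioc
    (ofReal_ne_top (r := a ^ (r - s))) hfin h (fun t ht => ?_) (fun t ht => ?_)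
  · have hat : a ≤ t := le_of_lt (not_le.1 fun hta => ht.2 ⟨hE' ht.1, hta⟩)
    rw [← ENNReal.ofReal_mul (Real.rpow_nonneg ha.le _)]
    exact ENNReal.ofReal_le_ofReal (Real.rpow_sub_one_le_mul_rpow_sub_one hrs ha hat)
  · rw [← ENNReal.ofReal_mul (Real.rpow_nonneg ha.le _)]
    exact ENNReal.ofReal_le_ofReal (Real.mul_rpow_sub_one_le_rpow_sub_one hrs ht.1.1 ht.1.2)

theorem exists_pos_rpow_div_self_eq {c y : ℝ} (hc : 0 < c) (hy : 0 < y) :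
    ∃ a > 0, a ^ c / c = y :=
  ⟨(c * y) ^ c⁻¹, by positivity, by
    rw [Real.rpow_inv_rpow (by positivity) hc.ne', mul_div_cancel_left₀ _ hc.ne']⟩

theorem rpow_div_self_eq_mul_rpow {a p γ : ℝ} (ha : 0 ≤ a) (hp : 0 < p) (hγ : 0 < γ) :
    a ^ γ / γ = p ^ (1 / p) * γ ^ (-(1 - 1 / p)) * (a ^ (p * γ) / (p * γ)) ^ (1 / p) := by
  have hpow : (a ^ (p * γ)) ^ (1 / p) = a ^ γ := by
    rw [← Real.rpow_mul ha]; field_simp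
  rw [Real.div_rpow (by positivity) (by positivity), hpow, Real.mul_rpow hp.le hγ.le,
    show -(1 - 1 / p) = 1 / p + (-1) by ring, Real.rpow_add hγ, Real.rpow_neg_one]
  field_simp

theorem indicator_rpow_lintegral_le_rpow_general (p γ : ℝ) (hp : 1 ≤ p) (hγ : 0 < γ)
    (E : Set ℝ) (hE : MeasurableSet E) (hE' : E ⊆ Ioi 0) :
    (∫⁻ t in Ioi (0 : ℝ),
        E.indicator (fun _ => (1 : ℝ≥0∞)) t * ENNReal.ofReal (t ^ (γ - 1))) ≤
      ENNReal.ofReal (p ^ (1 / p) * γ ^ (-(1 - 1 / p))) *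
        (∫⁻ t in Ioi (0 : ℝ),
            E.indicator (fun _ => (1 : ℝ≥0∞)) t * ENNReal.ofReal (t ^ (p * γ - 1))) ^ (1 / p) := by
  have hp0 : 0 < p := one_pos.trans_le hp
  have hpγ : 0 < p * γ := mul_pos hp0 hγ
  rw [lintegral_indicator_one_mul hE hE', lintegral_indicator_one_mul hE hE']
  set I := ∫⁻ t in E, ENNReal.ofReal (t ^ (p * γ - 1))
  rcases eq_or_ne I 0 with hI0 | hI0
  · have hE0 : volume E = 0 := measure_eq_zero_of_setLIntegral_eq_zero (by fun_prop)
      (fun t ht => (ENNReal.ofReal_pos.2 (Real.rpow_pos_of_pos (hE' ht) _)).ne') hI0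
    rw [Measure.restrict_eq_zero.2 hE0, lintegral_zero_measure]
    exact zero_le
  rcases eq_or_ne I ∞ with hItop | hItop
  · rw [hItop, top_rpow_of_pos (by positivity), mul_top (by positivity)]
    exact le_top
  obtain ⟨a, ha, hIa⟩ := exists_pos_rpow_div_self_eq hpγ (toReal_pos hI0 hItop)
  have hI : I = ∫⁻ t in Ioc 0 a, ENNReal.ofReal (t ^ (p * γ - 1)) := by
    rw [lintegral_Ioc_rpow_sub_one hpγ ha.le, hIa, ofReal_toReal hItop]
  calc ∫⁻ t in E, ENNReal.ofReal (t ^ (γ - 1))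
      ≤ ∫⁻ t in Ioc 0 a, ENNReal.ofReal (t ^ (γ - 1)) :=
        setLIntegral_rpow_sub_one_le_Ioc (le_mul_of_one_le_left hγ.le hp) ha hE hE' hItop hI.le
    _ = ENNReal.ofReal (a ^ γ / γ) := lintegral_Ioc_rpow_sub_one hγ ha.le
    _ = ENNReal.ofReal (p ^ (1 / p) * γ ^ (-(1 - 1 / p))) * I ^ (1 / p) := by
        rw [rpow_div_self_eq_mul_rpow ha.le hp0 hγ, ENNReal.ofReal_mul (by positivity),
          ← ENNReal.ofReal_rpow_of_nonneg (by positivity) (by positivity), hIa,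
          ofReal_toReal hItop]

/-- For `p ≥ 1`, `γ > 0` and a measurable set `E ⊆ (0, ∞)` of finite Lebesgue measure,
`∫₀^∞ χ_E(t) t^{γ-1} dt ≤ p^{1/p} γ^{-1/p'} (∫₀^∞ χ_E(t) t^{pγ-1} dt)^{1/p}`,
where `1/p + 1/p' = 1`. -/
theorem indicator_rpow_lintegral_le_rpow (p γ : ℝ) (hp : 1 ≤ p) (hγ : 0 < γ)
    (E : Set ℝ) (hE : MeasurableSet E) (hE' : E ⊆ Ioi 0) (hfin : volume E < ⊤) :
    (∫⁻ t in Ioi (0 : ℝ),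
        E.indicator (fun _ => (1 : ℝ≥0∞)) t * ENNReal.ofReal (t ^ (γ - 1))) ≤
      ENNReal.ofReal (p ^ (1 / p) * γ ^ (-(1 - 1 / p))) *
        (∫⁻ t in Ioi (0 : ℝ),
            E.indicator (fun _ => (1 : ℝ≥0∞)) t * ENNReal.ofReal (t ^ (p * γ - 1))) ^ (1 / p) :=
  indicator_rpow_lintegral_le_rpow_general p γ hp hγ E hE hE'
end

section
/- Let γ > 0, α ∈ ℝ, and p ≥ max{1, 1 - α}. There exists a constant C > 0, depending only on p, γ, α, such that for every measurable set E ⊆ (0, ∞) of finite measure, ∫₀^∞ χ_E(t) (sinh t)^γ dt ≤ C (∫₀^∞ χ_E(t) (cosh t)^α (sinh t)^{pγ - α} dt)^{1/p}. -/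
open MeasureTheory Set ENNReal

/-!
Write `w t = cosh t ^ α * sinh t ^ (p * γ - α)` and `J = ∫_E w`, and cut `E` at a threshold `s`.
On `(0, s]` the integral of `sinh ^ γ` is at most a constant times
`g(s) = sinh s ^ γ * min (sinh s) 1` (compare with `s * sinh s ^ γ` for small `s` and with
`sinh s ^ γ * ∫_{-∞}^s exp (γ (t - s)) dt` for large `s`). For `t ≥ s` the ratio
`sinh t ^ γ / w t = sinh t ^ ((1 - p) γ) * tanh t ^ α` is at most a constant times `g(s) ^ (1 - p)`;
this is where `p ≥ 1` and `p ≥ 1 - α` enter. Hence `∫_E sinh ^ γ ≲ g(s) + g(s) ^ (1 - p) J`,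
and choosing `s` with `g(s) = J ^ (1 / p)` makes both terms equal to `J ^ (1 / p)`.
-/

section Measure

variable {α : Type*} [MeasurableSpace α] {μ : Measure α}

theorem setLIntegral_indicator_one_mul {E S : Set α} (hE : MeasurableSet E) (hES : E ⊆ S)
    (f : α → ℝ≥0∞) :
    ∫⁻ t in S, E.indicator (fun _ => (1 : ℝ≥0∞)) t * f t ∂μ = ∫⁻ t in E, f t ∂μ := by
  simp_rw [← indicator_mul_left, one_mul]
  rw [lintegral_indicator hE, Measure.restrict_restrict hE, inter_eq_self_of_subset_left hES]

theorem setLIntegral_eq_zero_of_setLIntegral_eq_zero {E : Set α} {f w : α → ℝ≥0∞}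
    (hw : Measurable w) (hw_pos : ∀ t ∈ E, w t ≠ 0) (h : ∫⁻ t in E, w t ∂μ = 0) :
    ∫⁻ t in E, f t ∂μ = 0 := by
  refine le_antisymm ?_ zero_le
  calc ∫⁻ t in E, f t ∂μ ≤ ∫⁻ t in E, ⊤ * w t ∂μ :=
        setLIntegral_mono (measurable_const.mul hw) fun t ht => by
          rw [ENNReal.top_mul (hw_pos t ht)]; exact le_top
    _ = 0 := by rw [lintegral_const_mul _ hw, h, mul_zero]

theorem setLIntegral_le_setLIntegral_Ioc_add_mul [LinearOrder α] {E : Set α} {a s : α}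
    {f w : α → ℝ≥0∞} {K : ℝ≥0∞} (hw : Measurable w) (hE : E ⊆ Ioi a)
    (hfw : ∀ t, s < t → f t ≤ K * w t) :
    ∫⁻ t in E, f t ∂μ ≤ ∫⁻ t in Ioc a s, f t ∂μ + K * ∫⁻ t in E, w t ∂μ := by
  have hsplit : E ⊆ (E ∩ Ioc a s) ∪ (E ∩ Ioi s) := fun t ht => by
    rcases le_or_gt t s with h | h
    exacts [Or.inl ⟨ht, hE ht, h⟩, Or.inr ⟨ht, h⟩]
  calc ∫⁻ t in E, f t ∂μ
      ≤ ∫⁻ t in E ∩ Ioc a s, f t ∂μ + ∫⁻ t in E ∩ Ioi s, f t ∂μ :=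
        (lintegral_mono_set hsplit).trans (lintegral_union_le _ _ _)
    _ ≤ ∫⁻ t in Ioc a s, f t ∂μ + ∫⁻ t in E ∩ Ioi s, K * w t ∂μ :=
        add_le_add (lintegral_mono_set inter_subset_right)
          (setLIntegral_mono (measurable_const.mul hw) fun t ht => hfw t ht.2)
    _ ≤ ∫⁻ t in Ioc a s, f t ∂μ + K * ∫⁻ t in E, w t ∂μ := by
        rw [lintegral_const_mul _ hw]
        gcongr
        exact inter_subset_left

end Measure

namespace Real

theorem sinh_le_sinh_mul_exp_sub {s t : ℝ} (hts : t ≤ s) : sinh t ≤ sinh s * exp (t - s) := by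
  have key : sinh s * exp (t - s) = (exp t - exp (t - 2 * s)) / 2 := by
    rw [sinh_eq, div_mul_eq_mul_div, sub_mul, ← exp_add, ← exp_add]
    ring_nf
  rw [key, sinh_eq]
  gcongr
  linarith

theorem tanh_pos {t : ℝ} (ht : 0 < t) : 0 < tanh t := by
  rw [tanh_eq_sinh_div_cosh]
  exact div_pos (sinh_pos_iff.mpr ht) (cosh_pos t)

theorem min_sinh_one_le_two_mul_tanh {t : ℝ} (ht : 0 ≤ t) : min (sinh t) 1 ≤ 2 * tanh t := by
  have hσ : 0 ≤ sinh t := sinh_nonneg_iff.mpr ht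
  rw [tanh_eq_sinh_div_cosh, mul_div_assoc', le_div_iff₀ (cosh_pos t)]
  have hc := cosh_sq t
  rcases le_total (sinh t) 1 with h | h
  · rw [min_eq_left h]
    have : cosh t ≤ 2 := by nlinarith [cosh_pos t]
    nlinarith
  · rw [min_eq_right h, one_mul]
    nlinarith [cosh_pos t]

theorem tanh_rpow_le {s t α β : ℝ} (hs : 0 < s) (hst : s ≤ t) (hβ : β ≤ 0) (hβα : β ≤ α) :
    tanh t ^ α ≤ 2 ^ |α| * min (sinh s) 1 ^ β := by
  set m := min (sinh s) 1
  have hm0 : 0 < m := lt_min (sinh_pos_iff.mpr hs) one_pos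
  have hm1 : m ≤ 1 := min_le_right _ _
  have htanh : 0 < tanh t := tanh_pos (hs.trans_le hst)
  rcases le_or_gt 0 α with hα | hα
  · calc tanh t ^ α ≤ 1 := rpow_le_one htanh.le (tanh_lt_one t).le hα
      _ ≤ 2 ^ |α| * m ^ β := one_le_mul_of_one_le_of_one_le
          (one_le_rpow one_le_two (abs_nonneg α))
          (one_le_rpow_of_pos_of_le_one_of_nonpos hm0 hm1 hβ)
  · have hmt : m / 2 ≤ tanh t := by
      have : m ≤ min (sinh t) 1 := min_le_min_right 1 (sinh_le_sinh.mpr hst)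
      linarith [min_sinh_one_le_two_mul_tanh (hs.le.trans hst)]
    calc tanh t ^ α ≤ (m / 2) ^ α := rpow_le_rpow_of_nonpos (by positivity) hmt hα.le
      _ = 2 ^ |α| * m ^ α := by
        rw [div_rpow hm0.le zero_le_two, abs_of_neg hα, rpow_neg zero_le_two]
        ring
      _ ≤ 2 ^ |α| * m ^ β :=
        mul_le_mul_of_nonneg_left (rpow_le_rpow_of_exponent_ge hm0 hm1 hβα) (by positivity)

theorem sinh_rpow_eq_mul_tanh_rpow {t : ℝ} (ht : 0 < t) (γ α p : ℝ) :
    sinh t ^ γ = sinh t ^ ((1 - p) * γ) * tanh t ^ α * (cosh t ^ α * sinh t ^ (p * γ - α)) := by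
  have hσ : 0 < sinh t := sinh_pos_iff.mpr ht
  rw [tanh_eq_sinh_div_cosh, div_rpow hσ.le (cosh_pos t).le]
  field_simp
  rw [← rpow_add hσ, ← rpow_add hσ]
  ring_nf

end Real

open Real

noncomputable def sinhProfile (γ s : ℝ) : ℝ := sinh s ^ γ * min (sinh s) 1

theorem sinhProfile_nonneg (γ : ℝ) {s : ℝ} (hs : 0 ≤ s) : 0 ≤ sinhProfile γ s := by
  have := sinh_nonneg_iff.mpr hs
  exact mul_nonneg (rpow_nonneg this γ) (le_min this zero_le_one)

theorem cosh_rpow_mul_sinh_rpow_pos {t : ℝ} (ht : 0 < t) (α β : ℝ) :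
    0 < cosh t ^ α * sinh t ^ β :=
  mul_pos (rpow_pos_of_pos (cosh_pos t) α) (rpow_pos_of_pos (sinh_pos_iff.mpr ht) β)

theorem sinh_rpow_le_mul_weight {γ α p s t : ℝ} (hγ : 0 < γ) (hp : 1 ≤ p) (hpα : 1 - α ≤ p)
    (hs : 0 < s) (hst : s ≤ t) :
    sinh t ^ γ ≤ 2 ^ |α| * sinhProfile γ s ^ (1 - p) * (cosh t ^ α * sinh t ^ (p * γ - α)) := by
  have hσ : 0 < sinh s := sinh_pos_iff.mpr hs
  have hprofile :
      sinhProfile γ s ^ (1 - p) = sinh s ^ ((1 - p) * γ) * min (sinh s) 1 ^ (1 - p) := by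
    rw [sinhProfile, mul_rpow (rpow_nonneg hσ.le _) (le_min hσ.le zero_le_one), ← rpow_mul hσ.le,
      mul_comm γ]
  have hsinh : sinh t ^ ((1 - p) * γ) ≤ sinh s ^ ((1 - p) * γ) :=
    rpow_le_rpow_of_nonpos hσ (sinh_le_sinh.mpr hst)
      (mul_nonpos_of_nonpos_of_nonneg (by linarith) hγ.le)
  have htanh : tanh t ^ α ≤ 2 ^ |α| * min (sinh s) 1 ^ (1 - p) :=
    tanh_rpow_le hs hst (by linarith) (by linarith)
  have hw := (cosh_rpow_mul_sinh_rpow_pos (hs.trans_le hst) α (p * γ - α)).le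
  rw [sinh_rpow_eq_mul_tanh_rpow (hs.trans_le hst) γ α p, hprofile]
  calc sinh t ^ ((1 - p) * γ) * tanh t ^ α * (cosh t ^ α * sinh t ^ (p * γ - α))
      ≤ sinh s ^ ((1 - p) * γ) * (2 ^ |α| * min (sinh s) 1 ^ (1 - p)) *
          (cosh t ^ α * sinh t ^ (p * γ - α)) := by
        gcongr
        exact (rpow_pos_of_pos (tanh_pos (hs.trans_le hst)) α).le
    _ = _ := by ring

theorem setLIntegral_Ioc_sinh_rpow_le_mul {γ s : ℝ} (hγ : 0 ≤ γ) (hs : 0 ≤ s) :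
    ∫⁻ t in Ioc 0 s, ENNReal.ofReal (sinh t ^ γ) ≤ ENNReal.ofReal (s * sinh s ^ γ) := by
  calc ∫⁻ t in Ioc 0 s, ENNReal.ofReal (sinh t ^ γ)
      ≤ ∫⁻ _ in Ioc 0 s, ENNReal.ofReal (sinh s ^ γ) :=
        setLIntegral_mono measurable_const fun t ht => ENNReal.ofReal_le_ofReal <|
          rpow_le_rpow (sinh_nonneg_iff.mpr ht.1.le) (sinh_le_sinh.mpr ht.2) hγ
    _ = ENNReal.ofReal (s * sinh s ^ γ) := by
        rw [setLIntegral_const, Real.volume_Ioc, sub_zero, ← ENNReal.ofReal_mul (by positivity),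
          mul_comm]

theorem setLIntegral_Ioc_sinh_rpow_le_div {γ s : ℝ} (hγ : 0 < γ) (hs : 0 ≤ s) :
    ∫⁻ t in Ioc 0 s, ENNReal.ofReal (sinh t ^ γ) ≤ ENNReal.ofReal (sinh s ^ γ / γ) := by
  set c := sinh s ^ γ * exp (-(γ * s))
  have hc : 0 ≤ c := by
    have := sinh_nonneg_iff.mpr hs
    positivity
  calc ∫⁻ t in Ioc 0 s, ENNReal.ofReal (sinh t ^ γ)
      ≤ ∫⁻ t in Iic s, ENNReal.ofReal c * ENNReal.ofReal (exp (γ * t)) := by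
        refine (setLIntegral_mono (by fun_prop) fun t ht => ?_).trans
          (lintegral_mono_set Ioc_subset_Iic_self)
        rw [← ENNReal.ofReal_mul hc]
        refine ENNReal.ofReal_le_ofReal ?_
        calc sinh t ^ γ ≤ (sinh s * exp (t - s)) ^ γ :=
              rpow_le_rpow (sinh_nonneg_iff.mpr ht.1.le) (sinh_le_sinh_mul_exp_sub ht.2) hγ.le
          _ = c * exp (γ * t) := by
              rw [mul_rpow (sinh_nonneg_iff.mpr (ht.1.trans_le ht.2).le) (exp_pos _).le,
                ← exp_mul, mul_assoc, ← exp_add]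
              ring_nf
    _ = ENNReal.ofReal (sinh s ^ γ / γ) := by
        rw [lintegral_const_mul _ (by fun_prop), ← ofReal_integral_eq_lintegral_ofReal
          (integrableOn_exp_mul_Iic hγ s) (ae_of_all _ fun t => (exp_pos _).le),
          integral_exp_mul_Iic hγ, ← ENNReal.ofReal_mul hc, mul_div_assoc', mul_assoc,
          ← exp_add, neg_add_cancel, exp_zero, mul_one]

theorem setLIntegral_Ioc_sinh_rpow_le_profile {γ s : ℝ} (hγ : 0 < γ) (hs : 0 ≤ s) :
    ∫⁻ t in Ioc 0 s, ENNReal.ofReal (sinh t ^ γ) ≤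
      ENNReal.ofReal (max 1 γ⁻¹ * sinhProfile γ s) := by
  have hσ : 0 ≤ sinh s := sinh_nonneg_iff.mpr hs
  have hσγ : 0 ≤ sinh s ^ γ := rpow_nonneg hσ γ
  rw [sinhProfile]
  rcases le_total (sinh s) 1 with h | h
  · refine (setLIntegral_Ioc_sinh_rpow_le_mul hγ.le hs).trans (ENNReal.ofReal_le_ofReal ?_)
    rw [min_eq_left h]
    calc s * sinh s ^ γ ≤ 1 * (sinh s ^ γ * sinh s) := by
          rw [one_mul, mul_comm]; exact mul_le_mul_of_nonneg_left (self_le_sinh_iff.mpr hs) hσγ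
      _ ≤ max 1 γ⁻¹ * (sinh s ^ γ * sinh s) :=
          mul_le_mul_of_nonneg_right (le_max_left _ _) (mul_nonneg hσγ hσ)
  · refine (setLIntegral_Ioc_sinh_rpow_le_div hγ hs).trans (ENNReal.ofReal_le_ofReal ?_)
    rw [min_eq_right h, mul_one, div_eq_inv_mul]
    exact mul_le_mul_of_nonneg_right (le_max_right _ _) hσγ

theorem exists_sinhProfile_eq {γ x : ℝ} (hγ : 0 < γ) (hx : 0 < x) :
    ∃ s, 0 < s ∧ sinhProfile γ s = x := by
  suffices ∃ σ, 0 < σ ∧ σ ^ γ * min σ 1 = x by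
    obtain ⟨σ, hσ, hσx⟩ := this
    exact ⟨arsinh σ, arsinh_pos_iff.mpr hσ, by rwa [sinhProfile, sinh_arsinh]⟩
  rcases le_total x 1 with hx1 | hx1
  · refine ⟨x ^ (γ + 1)⁻¹, by positivity, ?_⟩
    rw [min_eq_left (rpow_le_one hx.le hx1 (by positivity)), ← rpow_add_one (by positivity),
      ← rpow_mul hx.le, inv_mul_cancel₀ (by positivity), Real.rpow_one]
  · refine ⟨x ^ γ⁻¹, by positivity, ?_⟩
    rw [min_eq_right (one_le_rpow hx1 (by positivity)), mul_one, ← rpow_mul hx.le,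
      inv_mul_cancel₀ hγ.ne', Real.rpow_one]

theorem setLIntegral_sinh_rpow_le {γ α p s : ℝ} {E : Set ℝ} (hγ : 0 < γ) (hp : 1 ≤ p)
    (hpα : 1 - α ≤ p) (hE : E ⊆ Ioi 0) (hs : 0 < s) :
    ∫⁻ t in E, ENNReal.ofReal (sinh t ^ γ) ≤
      ENNReal.ofReal (max 1 γ⁻¹ * sinhProfile γ s) +
        ENNReal.ofReal (2 ^ |α| * sinhProfile γ s ^ (1 - p)) *
          ∫⁻ t in E, ENNReal.ofReal (cosh t ^ α * sinh t ^ (p * γ - α)) := by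
  refine (setLIntegral_le_setLIntegral_Ioc_add_mul (by fun_prop) hE fun t hst => ?_).trans
    (add_le_add_left (setLIntegral_Ioc_sinh_rpow_le_profile hγ hs.le) _)
  have hK : 0 ≤ 2 ^ |α| * sinhProfile γ s ^ (1 - p) :=
    mul_nonneg (by positivity) (rpow_nonneg (sinhProfile_nonneg γ hs.le) _)
  rw [← ENNReal.ofReal_mul hK]
  exact ENNReal.ofReal_le_ofReal (sinh_rpow_le_mul_weight hγ hp hpα hs hst.le)

theorem setLIntegral_sinh_rpow_le_rpow {γ α p : ℝ} {E : Set ℝ} (hγ : 0 < γ) (hp : 1 ≤ p)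
    (hpα : 1 - α ≤ p) (hE : E ⊆ Ioi 0)
    (hJ0 : ∫⁻ t in E, ENNReal.ofReal (cosh t ^ α * sinh t ^ (p * γ - α)) ≠ 0)
    (hJtop : ∫⁻ t in E, ENNReal.ofReal (cosh t ^ α * sinh t ^ (p * γ - α)) ≠ ⊤) :
    ∫⁻ t in E, ENNReal.ofReal (sinh t ^ γ) ≤
      ENNReal.ofReal (max 1 γ⁻¹ + 2 ^ |α|) *
        (∫⁻ t in E, ENNReal.ofReal (cosh t ^ α * sinh t ^ (p * γ - α))) ^ (1 / p) := by
  set J := ∫⁻ t in E, ENNReal.ofReal (cosh t ^ α * sinh t ^ (p * γ - α))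
  have hJ : J = ENNReal.ofReal J.toReal := (ofReal_toReal hJtop).symm
  have hj : 0 < J.toReal := toReal_pos hJ0 hJtop
  set j := J.toReal
  obtain ⟨s, hs, hsx⟩ := exists_sinhProfile_eq hγ (rpow_pos_of_pos hj (1 / p))
  have hx : (j ^ (1 / p)) ^ (1 - p) * j = j ^ (1 / p) := by
    rw [← rpow_mul hj.le, ← rpow_add_one hj.ne']
    congr 1
    field_simp
    ring
  calc ∫⁻ t in E, ENNReal.ofReal (sinh t ^ γ)
      ≤ ENNReal.ofReal (max 1 γ⁻¹ * j ^ (1 / p)) +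
          ENNReal.ofReal (2 ^ |α| * (j ^ (1 / p)) ^ (1 - p)) * J := by
        simpa only [hsx] using setLIntegral_sinh_rpow_le hγ hp hpα hE hs
    _ = ENNReal.ofReal (max 1 γ⁻¹ + 2 ^ |α|) * J ^ (1 / p) := by
        rw [hJ, ← ENNReal.ofReal_mul (by positivity), mul_assoc, hx,
          ← ENNReal.ofReal_add (by positivity) (by positivity), ofReal_rpow_of_pos hj,
          ← ENNReal.ofReal_mul (by positivity), add_mul]

/-- For `γ > 0`, `α ∈ ℝ` and `p ≥ max {1, 1 - α}`, there is a constant `C > 0`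
(depending only on `p, γ, α`) such that for every measurable set `E ⊆ (0, ∞)` of finite
measure, `∫₀^∞ χ_E(t) (sinh t)^γ dt ≤ C (∫₀^∞ χ_E(t) (cosh t)^α (sinh t)^{pγ-α} dt)^{1/p}`. -/
theorem indicator_sinh_lintegral_le_rpow (γ α p : ℝ) (hγ : 0 < γ)
    (hp : max 1 (1 - α) ≤ p) :
    ∃ C : ℝ, 0 < C ∧ ∀ E : Set ℝ, MeasurableSet E → E ⊆ Ioi 0 → volume E < ⊤ →
      (∫⁻ t in Ioi (0 : ℝ),
          E.indicator (fun _ => (1 : ℝ≥0∞)) t * ENNReal.ofReal (Real.sinh t ^ γ)) ≤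
        ENNReal.ofReal C *
          (∫⁻ t in Ioi (0 : ℝ),
              E.indicator (fun _ => (1 : ℝ≥0∞)) t *
                ENNReal.ofReal (Real.cosh t ^ α * Real.sinh t ^ (p * γ - α))) ^ (1 / p) := by
  obtain ⟨hp1, hpα⟩ := max_le_iff.mp hp
  refine ⟨max 1 γ⁻¹ + 2 ^ |α|, by positivity, fun E hE hE0 _ => ?_⟩
  rw [setLIntegral_indicator_one_mul hE hE0, setLIntegral_indicator_one_mul hE hE0]
  set J := ∫⁻ t in E, ENNReal.ofReal (cosh t ^ α * sinh t ^ (p * γ - α))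
  rcases eq_or_ne J 0 with hJ0 | hJ0
  · have hw_pos (t : ℝ) (ht : t ∈ E) : ENNReal.ofReal (cosh t ^ α * sinh t ^ (p * γ - α)) ≠ 0 :=
      (ENNReal.ofReal_pos.mpr (cosh_rpow_mul_sinh_rpow_pos (hE0 ht) _ _)).ne'
    rw [setLIntegral_eq_zero_of_setLIntegral_eq_zero (by fun_prop) hw_pos hJ0]
    exact zero_le
  rcases eq_or_ne J ⊤ with hJtop | hJtop
  · rw [hJtop, top_rpow_of_pos (by positivity),
      mul_top (ENNReal.ofReal_pos.mpr (by positivity)).ne']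
    exact le_top
  exact setLIntegral_sinh_rpow_le_rpow hγ hp1 hpα hE0 hJ0 hJtop
end

section
/- Let η₁, η₂ > 0 and p ≥ 1. There exists a constant C > 0, depending only on p, η₁, η₂, such that for every measurable set E ⊆ (0, π/2), ∫₀^{π/2} χ_E(t) (sin t)^{η₁ - 1} (cos t)^{η₂ - 1} dt ≤ C (∫₀^{π/2} χ_E(t) (sin t)^{p η₁ - 1} (cos t)^{p η₂ - 1} dt)^{1/p}. -/
open MeasureTheory Set ENNReal Real Filter Topology

/-!
Write `w = sin ^ (η₁ - 1) * cos ^ (η₂ - 1)` and `g = sin ^ η₁ * cos ^ η₂`, so that the weight on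
the right is `w * g ^ (p - 1)`. Every sublevel set `{g < λ}` has `w dt`-mass `O(λ)`: near each
endpoint of `(0, π/2)`, `g` is comparable to `s ^ η` and `w dt` to `s ^ (η - 1) ds`, where `s` is
the distance to the endpoint. Cut `E` at the level `λ = (∫_E w g ^ (p - 1)) ^ (1 / p)`: the part
below the level has mass `O(λ)`, and by Chebyshev the part above has mass at most
`λ ^ (1 - p) ∫_E w g ^ (p - 1) = λ`.
-/

section Sublevel

variable {α : Type*} [MeasurableSpace α] {μ : Measure α} {w g : α → ℝ≥0∞} {C : ℝ≥0∞} {p : ℝ}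

theorem rpow_mul_setLIntegral_le_lintegral_mul_rpow (hg : Measurable g) {q : ℝ} (hq : 0 ≤ q)
    (lam : ℝ≥0∞) :
    lam ^ q * ∫⁻ x in {x | lam ≤ g x}, w x ∂μ ≤ ∫⁻ x, w x * g x ^ q ∂μ :=
  calc lam ^ q * ∫⁻ x in {x | lam ≤ g x}, w x ∂μ
      ≤ ∫⁻ x in {x | lam ≤ g x}, lam ^ q * w x ∂μ := lintegral_const_mul_le _ _
    _ ≤ ∫⁻ x in {x | lam ≤ g x}, w x * g x ^ q ∂μ :=
        setLIntegral_mono' (measurableSet_le measurable_const hg) fun x hx => by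
          rw [mul_comm]; gcongr; exact hx
    _ ≤ ∫⁻ x, w x * g x ^ q ∂μ := setLIntegral_le_lintegral _ _

theorem lintegral_le_mul_rpow_of_lintegral_sublevel_le (hg : Measurable g) (hC : C ≠ ∞)
    (hp : 1 ≤ p)
    (hsub : ∀ lam : ℝ≥0∞, lam ≠ 0 → lam ≠ ∞ → ∫⁻ x in {x | g x < lam}, w x ∂μ ≤ C * lam) :
    ∫⁻ x, w x ∂μ ≤ (C + 1) * (∫⁻ x, w x * g x ^ (p - 1) ∂μ) ^ (1 / p) := by
  have hp0 : 0 < p := by linarith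
  set V := ∫⁻ x, w x * g x ^ (p - 1) ∂μ
  have hcut : ∀ lam : ℝ≥0∞, lam ≠ 0 → lam ≠ ∞ →
      ∫⁻ x, w x ∂μ ≤ C * lam + ∫⁻ x in {x | lam ≤ g x}, w x ∂μ := by
    intro lam h0 htop
    have hA : MeasurableSet {x | g x < lam} := measurableSet_lt hg measurable_const
    rw [← lintegral_add_compl w hA]
    gcongr
    · exact hsub lam h0 htop
    · simp [compl_ofPred]
  have chebyshev (lam : ℝ≥0∞) : lam ^ (p - 1) * ∫⁻ x in {x | lam ≤ g x}, w x ∂μ ≤ V :=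
    rpow_mul_setLIntegral_le_lintegral_mul_rpow hg (sub_nonneg.2 hp) lam
  rcases eq_or_ne V 0 with hV0 | hV0
  -- the level `V ^ (1 / p)` degenerates to `0`; let the level tend to `0` instead
  · suffices ∫⁻ x, w x ∂μ ≤ 0 from this.trans zero_le
    have hlim : Tendsto (fun n : ℕ => C * (n : ℝ≥0∞)⁻¹) atTop (𝓝 0) := by
      simpa using ENNReal.Tendsto.const_mul ENNReal.tendsto_inv_nat_nhds_zero (Or.inr hC)
    refine ge_of_tendsto hlim ?_
    filter_upwards [eventually_ne_atTop 0] with n hn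
    have h0 : (n : ℝ≥0∞)⁻¹ ≠ 0 := by simp
    have htop : (n : ℝ≥0∞)⁻¹ ≠ ∞ := by simpa using hn
    have hsup : ∫⁻ x in {x | (n : ℝ≥0∞)⁻¹ ≤ g x}, w x ∂μ = 0 := by
      have := chebyshev (n : ℝ≥0∞)⁻¹
      rw [hV0, nonpos_iff_eq_zero, mul_eq_zero] at this
      exact this.resolve_left (ENNReal.rpow_pos (pos_iff_ne_zero.2 h0) htop).ne'
    simpa [hsup] using hcut _ h0 htop
  rcases eq_or_ne V ∞ with hVtop | hVtop
  · rw [hVtop, ENNReal.top_rpow_of_pos (one_div_pos.2 hp0), ENNReal.mul_top (by simp)]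
    exact le_top
  set lam := V ^ (1 / p) with hlam
  have hlam0 : lam ≠ 0 := (ENNReal.rpow_pos (pos_iff_ne_zero.2 hV0) hVtop).ne'
  have hlamtop : lam ≠ ∞ := ENNReal.rpow_ne_top_of_nonneg (by positivity) hVtop
  have hsup : ∫⁻ x in {x | lam ≤ g x}, w x ∂μ ≤ lam := by
    rw [← ENNReal.mul_le_mul_iff_right (ENNReal.rpow_pos (pos_iff_ne_zero.2 hlam0) hlamtop).ne'
      (ENNReal.rpow_ne_top_of_nonneg (sub_nonneg.2 hp) hlamtop)]
    calc lam ^ (p - 1) * ∫⁻ x in {x | lam ≤ g x}, w x ∂μ ≤ V := chebyshev lam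
      _ = lam ^ (p - 1 + 1) := by
        rw [sub_add_cancel, hlam, one_div, ENNReal.rpow_inv_rpow hp0.ne']
      _ = lam ^ (p - 1) * lam := by rw [ENNReal.rpow_add _ _ hlam0 hlamtop, ENNReal.rpow_one]
  calc ∫⁻ x, w x ∂μ ≤ C * lam + lam := (hcut lam hlam0 hlamtop).trans (by gcongr)
    _ = (C + 1) * lam := by ring

theorem setLIntegral_le_mul_rpow_of_lintegral_sublevel_le (hg : Measurable g) (hC : C ≠ ∞)
    (hp : 1 ≤ p)
    (hsub : ∀ lam : ℝ≥0∞, lam ≠ 0 → lam ≠ ∞ → ∫⁻ x in {x | g x < lam}, w x ∂μ ≤ C * lam)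
    (E : Set α) :
    ∫⁻ x in E, w x ∂μ ≤ (C + 1) * (∫⁻ x in E, w x * g x ^ (p - 1) ∂μ) ^ (1 / p) :=
  lintegral_le_mul_rpow_of_lintegral_sublevel_le hg hC hp fun lam h0 htop =>
    (lintegral_mono' (Measure.restrict_mono subset_rfl Measure.restrict_le_self) le_rfl).trans
      (hsub lam h0 htop)

end Sublevel

theorem rpow_le_max_rpow_one_mul_rpow {c x y e : ℝ} (hc : 0 < c) (hy : 0 < y)
    (hlo : c * y ≤ x) (hhi : x ≤ y) : x ^ e ≤ max (c ^ e) 1 * y ^ e := by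
  have hx : 0 < x := (mul_pos hc hy).trans_le hlo
  rcases le_or_gt 0 e with he | he
  · calc x ^ e ≤ 1 * y ^ e := by rw [one_mul]; exact rpow_le_rpow hx.le hhi he
      _ ≤ _ := by gcongr; exact le_max_right _ _
  · calc x ^ e ≤ (c * y) ^ e := rpow_le_rpow_of_nonpos (by positivity) hlo he.le
      _ = c ^ e * y ^ e := mul_rpow hc.le hy.le
      _ ≤ _ := by gcongr; exact le_max_left _ _

theorem min_rpow_one_mul_rpow_le_rpow {c x y e : ℝ} (hc : 0 < c) (hy : 0 < y)
    (hlo : c * y ≤ x) (hhi : x ≤ y) : min (c ^ e) 1 * y ^ e ≤ x ^ e := by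
  have hx : 0 < x := (mul_pos hc hy).trans_le hlo
  rcases le_or_gt 0 e with he | he
  · calc min (c ^ e) 1 * y ^ e ≤ c ^ e * y ^ e := by gcongr; exact min_le_left _ _
      _ = (c * y) ^ e := (mul_rpow hc.le hy.le).symm
      _ ≤ x ^ e := rpow_le_rpow (by positivity) hlo he
  · calc min (c ^ e) 1 * y ^ e ≤ 1 * y ^ e := by gcongr; exact min_le_right _ _
      _ ≤ x ^ e := by rw [one_mul]; exact rpow_le_rpow_of_nonpos hx hhi he.le

theorem lintegral_Ioo_zero_rpow_sub_one {a b : ℝ} (ha : 0 < a) (hb : 0 < b) :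
    ∫⁻ t in Ioo 0 b, ENNReal.ofReal (t ^ (a - 1)) = ENNReal.ofReal (b ^ a / a) := by
  have hint : IntegrableOn (fun t : ℝ => t ^ (a - 1)) (Ioo 0 b) := by
    rw [← intervalIntegrable_iff_integrableOn_Ioo_of_le hb.le]
    exact intervalIntegral.intervalIntegrable_rpow' (by linarith)
  have hnonneg : 0 ≤ᵐ[volume.restrict (Ioo 0 b)] fun t : ℝ => t ^ (a - 1) := by
    filter_upwards [ae_restrict_mem measurableSet_Ioo] with t ht
    exact rpow_nonneg ht.1.le _
  rw [← ofReal_integral_eq_lintegral_ofReal hint hnonneg, ← integral_Ioc_eq_integral_Ioo,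
    ← intervalIntegral.integral_of_le hb.le, integral_rpow (Or.inl (by linarith)),
    sub_add_cancel, zero_rpow ha.ne', sub_zero]

theorem sin_cos_bounds_of_mem_Ioc {t : ℝ} (ht : t ∈ Ioc 0 (π / 4)) :
    2 / π * t ≤ sin t ∧ sin t ≤ t ∧ 1 / 2 * 1 ≤ cos t ∧ cos t ≤ 1 := by
  obtain ⟨ht0, htπ⟩ := ht
  have hπ := pi_pos
  refine ⟨mul_le_sin ht0.le (by linarith), sin_le ht0.le, ?_, cos_le_one t⟩
  rw [mul_one, ← cos_pi_div_three]
  exact cos_le_cos_of_nonneg_of_le_pi ht0.le (by linarith) (by linarith)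

theorem lintegral_sin_cos_sublevel_Ioc_le {a : ℝ} (ha : 0 < a) (b : ℝ) :
    ∃ C : ℝ≥0∞, C ≠ ∞ ∧ ∀ r : ℝ, 0 < r → ∀ S ⊆ Ioc 0 (π / 4),
      (∀ t ∈ S, sin t ^ a * cos t ^ b < r) →
      ∫⁻ t in S, ENNReal.ofReal (sin t ^ (a - 1) * cos t ^ (b - 1)) ≤ C * ENNReal.ofReal r := by
  have hπ := pi_pos
  set K := max ((2 / π) ^ (a - 1)) 1 * max ((1 / 2) ^ (b - 1)) 1
  set k := min ((2 / π) ^ a) 1 * min ((1 / 2) ^ b) 1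
  have hk : 0 < k := by positivity
  refine ⟨ENNReal.ofReal (K / (k * a)), ofReal_ne_top, fun r hr S hS hSr => ?_⟩
  have hupper (t) (ht : t ∈ S) : sin t ^ (a - 1) * cos t ^ (b - 1) ≤ K * t ^ (a - 1) := by
    obtain ⟨hs₁, hs₂, hc₁, hc₂⟩ := sin_cos_bounds_of_mem_Ioc (hS ht)
    have ht0 := (hS ht).1
    have hcos := rpow_le_max_rpow_one_mul_rpow (e := b - 1) one_half_pos one_pos hc₁ hc₂
    rw [Real.one_rpow, mul_one] at hcos
    calc sin t ^ (a - 1) * cos t ^ (b - 1)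
        ≤ (max ((2 / π) ^ (a - 1)) 1 * t ^ (a - 1)) * max ((1 / 2) ^ (b - 1)) 1 :=
          mul_le_mul (rpow_le_max_rpow_one_mul_rpow (by positivity) ht0 hs₁ hs₂) hcos
            (rpow_nonneg (by linarith) _) (by positivity)
      _ = K * t ^ (a - 1) := by ring
  have hT (t) (ht : t ∈ S) : t < (r / k) ^ a⁻¹ := by
    obtain ⟨hs₁, hs₂, hc₁, hc₂⟩ := sin_cos_bounds_of_mem_Ioc (hS ht)
    have ht0 := (hS ht).1
    have hcos := min_rpow_one_mul_rpow_le_rpow (e := b) one_half_pos one_pos hc₁ hc₂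
    rw [Real.one_rpow, mul_one] at hcos
    have hlower : k * t ^ a ≤ sin t ^ a * cos t ^ b :=
      calc k * t ^ a = (min ((2 / π) ^ a) 1 * t ^ a) * min ((1 / 2) ^ b) 1 := by ring
        _ ≤ sin t ^ a * cos t ^ b :=
          mul_le_mul (min_rpow_one_mul_rpow_le_rpow (by positivity) ht0 hs₁ hs₂) hcos
            (by positivity) (rpow_nonneg ((by positivity : (0 : ℝ) ≤ 2 / π * t).trans hs₁) _)
    rw [lt_rpow_inv_iff_of_pos ht0.le (by positivity) ha, lt_div_iff₀' hk]
    exact hlower.trans_lt (hSr t ht)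
  calc ∫⁻ t in S, ENNReal.ofReal (sin t ^ (a - 1) * cos t ^ (b - 1))
      ≤ ∫⁻ t in S, ENNReal.ofReal K * ENNReal.ofReal (t ^ (a - 1)) :=
        setLIntegral_mono (by fun_prop) fun t ht => by
          rw [← ofReal_mul (by positivity)]; exact ofReal_le_ofReal (hupper t ht)
    _ ≤ ∫⁻ t in Ioo 0 ((r / k) ^ a⁻¹), ENNReal.ofReal K * ENNReal.ofReal (t ^ (a - 1)) :=
        lintegral_mono_set fun t ht => ⟨(hS ht).1, hT t ht⟩
    _ = ENNReal.ofReal (K / (k * a)) * ENNReal.ofReal r := by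
        rw [lintegral_const_mul' _ _ ofReal_ne_top, lintegral_Ioo_zero_rpow_sub_one ha
          (by positivity), rpow_inv_rpow (by positivity) ha.ne', ← ofReal_mul (by positivity),
          ← ofReal_mul (by positivity)]
        congr 1
        field_simp

theorem setLIntegral_comp_pi_div_two_sub (F : ℝ → ℝ≥0∞) (S : Set ℝ) :
    ∫⁻ t in S, F t = ∫⁻ s in (fun s => π / 2 - s) ⁻¹' S, F (π / 2 - s) :=
  ((Measure.measurePreserving_sub_left volume (π / 2)).setLIntegral_comp_preimage_emb
    (Homeomorph.subLeft (π / 2)).measurableEmbedding F S).symm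

theorem lintegral_sin_cos_sublevel_le {a b : ℝ} (ha : 0 < a) (hb : 0 < b) :
    ∃ C : ℝ≥0∞, C ≠ ∞ ∧ ∀ lam : ℝ≥0∞, lam ≠ 0 → lam ≠ ∞ →
      ∫⁻ t in {t | ENNReal.ofReal (sin t ^ a * cos t ^ b) < lam},
        ENNReal.ofReal (sin t ^ (a - 1) * cos t ^ (b - 1)) ∂volume.restrict (Ioo 0 (π / 2)) ≤
        C * lam := by
  obtain ⟨C₁, hC₁, h₁⟩ := lintegral_sin_cos_sublevel_Ioc_le ha b
  obtain ⟨C₂, hC₂, h₂⟩ := lintegral_sin_cos_sublevel_Ioc_le hb a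
  refine ⟨C₁ + C₂, add_ne_top.2 ⟨hC₁, hC₂⟩, fun lam h0 htop => ?_⟩
  obtain ⟨r, hr, rfl⟩ : ∃ r : ℝ, 0 < r ∧ ENNReal.ofReal r = lam :=
    ⟨lam.toReal, toReal_pos h0 htop, ofReal_toReal htop⟩
  set S := {t | sin t ^ a * cos t ^ b < r}
  have hS : {t | ENNReal.ofReal (sin t ^ a * cos t ^ b) < ENNReal.ofReal r} = S := by
    ext t; exact ofReal_lt_ofReal_iff hr
  have hcover : S ∩ Ioo 0 (π / 2) ⊆ (Ioc 0 (π / 4) ∩ S) ∪ (Ioo (π / 4) (π / 2) ∩ S) := by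
    rintro t ⟨htS, ht0, htπ⟩
    rcases le_or_gt t (π / 4) with h | h
    · exact Or.inl ⟨⟨ht0, h⟩, htS⟩
    · exact Or.inr ⟨⟨h, htπ⟩, htS⟩
  have hreflect : ∫⁻ t in Ioo (π / 4) (π / 2) ∩ S,
      ENNReal.ofReal (sin t ^ (a - 1) * cos t ^ (b - 1)) ≤ C₂ * ENNReal.ofReal r := by
    rw [setLIntegral_comp_pi_div_two_sub]
    simp only [sin_pi_div_two_sub, cos_pi_div_two_sub, mul_comm (cos _ ^ (a - 1))]
    refine h₂ r hr _ (fun s hs => ⟨by linarith [hs.1.2], by linarith [hs.1.1]⟩) fun s hs => ?_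
    simpa [S, sin_pi_div_two_sub, cos_pi_div_two_sub, mul_comm] using hs.2
  rw [hS, Measure.restrict_restrict' measurableSet_Ioo]
  calc ∫⁻ t in S ∩ Ioo 0 (π / 2), ENNReal.ofReal (sin t ^ (a - 1) * cos t ^ (b - 1))
      ≤ (∫⁻ t in Ioc 0 (π / 4) ∩ S, ENNReal.ofReal (sin t ^ (a - 1) * cos t ^ (b - 1))) +
        ∫⁻ t in Ioo (π / 4) (π / 2) ∩ S, ENNReal.ofReal (sin t ^ (a - 1) * cos t ^ (b - 1)) :=
        (lintegral_mono_set hcover).trans (lintegral_union_le _ _ _)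
    _ ≤ C₁ * ENNReal.ofReal r + C₂ * ENNReal.ofReal r :=
        add_le_add (h₁ r hr _ inter_subset_left fun t ht => ht.2) hreflect
    _ = (C₁ + C₂) * ENNReal.ofReal r := (add_mul _ _ _).symm

theorem ofReal_rpow_mul_rpow_mul_rpow_sub_one {x y : ℝ} (hx : 0 < x) (hy : 0 < y) (a b : ℝ)
    {p : ℝ} (hp : 1 ≤ p) :
    ENNReal.ofReal (x ^ (a - 1) * y ^ (b - 1)) * ENNReal.ofReal (x ^ a * y ^ b) ^ (p - 1) =
      ENNReal.ofReal (x ^ (p * a - 1) * y ^ (p * b - 1)) := by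
  rw [ofReal_rpow_of_nonneg (by positivity) (by linarith), ← ofReal_mul (by positivity),
    mul_rpow (by positivity) (by positivity), ← rpow_mul hx.le, ← rpow_mul hy.le]
  congr 1
  calc x ^ (a - 1) * y ^ (b - 1) * (x ^ (a * (p - 1)) * y ^ (b * (p - 1)))
      = x ^ (a - 1 + a * (p - 1)) * y ^ (b - 1 + b * (p - 1)) := by
        rw [rpow_add hx, rpow_add hy]; ring
    _ = x ^ (p * a - 1) * y ^ (p * b - 1) := by ring_nf

/-- For `η₁, η₂ > 0` and `p ≥ 1`, there is a constant `C > 0` (depending only on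
`p, η₁, η₂`) such that for every measurable set `E ⊆ (0, π/2)`,
`∫₀^{π/2} χ_E(t) (sin t)^{η₁-1} (cos t)^{η₂-1} dt
  ≤ C (∫₀^{π/2} χ_E(t) (sin t)^{pη₁-1} (cos t)^{pη₂-1} dt)^{1/p}`. -/
theorem indicator_sin_cos_lintegral_le_rpow (η₁ η₂ p : ℝ) (hη₁ : 0 < η₁) (hη₂ : 0 < η₂)
    (hp : 1 ≤ p) :
    ∃ C : ℝ, 0 < C ∧ ∀ E : Set ℝ, MeasurableSet E → E ⊆ Ioo 0 (π / 2) →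
      (∫⁻ t in Ioo (0 : ℝ) (π / 2),
          E.indicator (fun _ => (1 : ℝ≥0∞)) t *
            ENNReal.ofReal (Real.sin t ^ (η₁ - 1) * Real.cos t ^ (η₂ - 1))) ≤
        ENNReal.ofReal C *
          (∫⁻ t in Ioo (0 : ℝ) (π / 2),
              E.indicator (fun _ => (1 : ℝ≥0∞)) t *
                ENNReal.ofReal (Real.sin t ^ (p * η₁ - 1) * Real.cos t ^ (p * η₂ - 1))) ^ (1 / p) := by
  obtain ⟨C, hC, hsub⟩ := lintegral_sin_cos_sublevel_le hη₁ hη₂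
  have hC1 : C + 1 ≠ ∞ := add_ne_top.2 ⟨hC, one_ne_top⟩
  refine ⟨(C + 1).toReal, toReal_pos (by simp) hC1, fun E hE _ => ?_⟩
  have hind (f : ℝ → ℝ≥0∞) : ∫⁻ t in Ioo 0 (π / 2), E.indicator (fun _ => 1) t * f t =
      ∫⁻ t in E, f t ∂volume.restrict (Ioo 0 (π / 2)) := by
    simp_rw [← indicator_mul_left _ (fun _ => (1 : ℝ≥0∞)), one_mul, lintegral_indicator hE]
  rw [hind, hind, ofReal_toReal hC1]
  have hweight : ∀ᵐ t ∂(volume.restrict (Ioo 0 (π / 2))).restrict E,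
      ENNReal.ofReal (sin t ^ (η₁ - 1) * cos t ^ (η₂ - 1)) *
        ENNReal.ofReal (sin t ^ η₁ * cos t ^ η₂) ^ (p - 1) =
      ENNReal.ofReal (sin t ^ (p * η₁ - 1) * cos t ^ (p * η₂ - 1)) := by
    refine ae_restrict_of_ae ?_
    filter_upwards [ae_restrict_mem measurableSet_Ioo] with t ⟨ht0, htπ⟩
    exact ofReal_rpow_mul_rpow_mul_rpow_sub_one (sin_pos_of_pos_of_lt_pi ht0 (by linarith))
      (cos_pos_of_mem_Ioo ⟨by linarith, htπ⟩) η₁ η₂ hp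
  rw [← lintegral_congr_ae hweight]
  exact setLIntegral_le_mul_rpow_of_lintegral_sublevel_le (by fun_prop) hC hp hsub E
end

section
/- Let 1 ≤ p < ∞, γ < 0, and let f ∈ L^p(ℝ, (1 + e^x)^γ dx) be nonnegative. Then liminf_{h → -∞} ‖f + τ_h f‖_{L^p(ℝ, (1+e^x)^γ dx)} ≥ 2^{1/p} ‖f‖_{L^p(ℝ, (1+e^x)^γ dx)}, where τ_h f(x) = f(x - h) is the translation of f by h. -/
/-!
Since the weight is decreasing, for `h ≤ 0` the translate `τ_h f` has weighted norm at least
`‖f‖`: substituting `x = y + h` replaces the weight `w y` by `w (y + h) ≥ w y`. Together with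
`a ^ p + b ^ p ≤ (a + b) ^ p` for `a, b ≥ 0` and `1 ≤ p`, this gives
`2 ‖f‖ ^ p ≤ ‖f + τ_h f‖ ^ p` for every `h ≤ 0`, hence the bound on the liminf.
-/

open MeasureTheory Filter ENNReal

section Superadditivity

variable {α : Type*} [MeasurableSpace α] {μ : Measure α} {p : ℝ} {f g : α → ℝ}

theorem eLpNorm'_rpow_add_le_eLpNorm'_add_rpow (hp : 1 ≤ p) (hf : 0 ≤ f) (hg : 0 ≤ g) :
    eLpNorm' f p μ ^ p + eLpNorm' g p μ ^ p ≤ eLpNorm' (f + g) p μ ^ p := by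
  simp only [← lintegral_rpow_enorm_eq_rpow_eLpNorm' (zero_lt_one.trans_le hp)]
  refine (le_lintegral_add _ _).trans (lintegral_mono fun x => ?_)
  rw [Pi.add_apply, Real.enorm_eq_ofReal (hf x), Real.enorm_eq_ofReal (hg x),
    Real.enorm_eq_ofReal (add_nonneg (hf x) (hg x)), ENNReal.ofReal_add (hf x) (hg x)]
  exact ENNReal.add_rpow_le_rpow_add _ _ hp

theorem two_rpow_mul_eLpNorm'_le_eLpNorm'_add (hp : 1 ≤ p) (hf : 0 ≤ f) (hg : 0 ≤ g)
    (hfg : eLpNorm' f p μ ≤ eLpNorm' g p μ) :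
    (2 : ℝ≥0∞) ^ (1 / p) * eLpNorm' f p μ ≤ eLpNorm' (f + g) p μ := by
  have hp0 : 0 < p := zero_lt_one.trans_le hp
  have h2 : 2 * eLpNorm' f p μ ^ p ≤ eLpNorm' (f + g) p μ ^ p := by
    rw [two_mul]
    exact (add_le_add_right (ENNReal.rpow_le_rpow hfg hp0.le) _).trans
      (eLpNorm'_rpow_add_le_eLpNorm'_add_rpow hp hf hg)
  rwa [← ENNReal.rpow_le_rpow_iff hp0, ENNReal.mul_rpow_of_nonneg _ _ hp0.le, ← ENNReal.rpow_mul,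
    one_div_mul_cancel hp0.ne', ENNReal.rpow_one]

end Superadditivity

section Translation

variable {G : Type*} [AddCommGroup G] [PartialOrder G] [IsOrderedAddMonoid G] [MeasurableSpace G]
  [MeasurableAdd G] {μ : Measure G} [μ.IsAddRightInvariant] {w : G → ℝ≥0∞} {h : G}

theorem lintegral_withDensity_le_lintegral_comp_sub_of_antitone (hw : Measurable w)
    (hw_anti : Antitone w) (hw_fin : ∀ᵐ x ∂μ, w x < ∞) (hh : h ≤ 0) (g : G → ℝ≥0∞) :
    ∫⁻ x, g x ∂μ.withDensity w ≤ ∫⁻ x, g (x - h) ∂μ.withDensity w := by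
  rw [lintegral_withDensity_eq_lintegral_mul_non_measurable _ hw hw_fin,
    lintegral_withDensity_eq_lintegral_mul_non_measurable _ hw hw_fin]
  conv_rhs => rw [← lintegral_add_right_eq_self _ h]
  refine lintegral_mono fun y => ?_
  simp only [Pi.mul_apply, add_sub_cancel_right]
  exact mul_le_mul_left (hw_anti (add_le_of_nonpos_right hh)) _

theorem eLpNorm'_le_eLpNorm'_comp_sub_of_antitone {ε : Type*} [ENorm ε] {p : ℝ} (hp : 0 ≤ p)
    (hw : Measurable w) (hw_anti : Antitone w) (hw_fin : ∀ᵐ x ∂μ, w x < ∞) (hh : h ≤ 0)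
    (f : G → ε) :
    eLpNorm' f p (μ.withDensity w) ≤ eLpNorm' (fun x => f (x - h)) p (μ.withDensity w) := by
  simp only [eLpNorm'_eq_lintegral_enorm]
  gcongr ?_ ^ _
  exact lintegral_withDensity_le_lintegral_comp_sub_of_antitone hw hw_anti hw_fin hh _

end Translation

theorem antitone_ofReal_one_add_exp_rpow {γ : ℝ} (hγ : γ ≤ 0) :
    Antitone fun x => ENNReal.ofReal ((1 + Real.exp x) ^ γ) :=
  fun _ _ hxy => ENNReal.ofReal_le_ofReal <|
    Real.rpow_le_rpow_of_nonpos (by positivity) (by gcongr) hγ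

theorem liminf_translate_weighted_norm_general (p γ : ℝ) (hp : 1 ≤ p) (hγ : γ < 0)
    (μ : Measure ℝ)
    (hμ : μ = volume.withDensity fun x => ENNReal.ofReal ((1 + Real.exp x) ^ γ))
    (f : ℝ → ℝ) (hf0 : ∀ x, 0 ≤ f x) :
    (2 : ℝ≥0∞) ^ (1 / p) * eLpNorm f (ENNReal.ofReal p) μ ≤
      liminf (fun h : ℝ => eLpNorm (fun x => f x + f (x - h)) (ENNReal.ofReal p) μ) atBot := by
  have hp0 : 0 < p := zero_lt_one.trans_le hp
  have hLp : ∀ g : ℝ → ℝ, eLpNorm g (ENNReal.ofReal p) μ = eLpNorm' g p μ := fun g => by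
    rw [eLpNorm_eq_eLpNorm' (ENNReal.ofReal_pos.2 hp0).ne' ENNReal.ofReal_ne_top,
      ENNReal.toReal_ofReal hp0.le]
  simp only [hLp]
  refine le_liminf_of_le (by isBoundedDefault) (eventually_atBot.2 ⟨0, fun h hh => ?_⟩)
  subst hμ
  exact two_rpow_mul_eLpNorm'_le_eLpNorm'_add hp hf0 (fun x => hf0 (x - h))
    (eLpNorm'_le_eLpNorm'_comp_sub_of_antitone hp0.le (by fun_prop)
      (antitone_ofReal_one_add_exp_rpow hγ.le) (ae_of_all _ fun _ => ofReal_lt_top) hh f)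

/-- For `1 ≤ p < ∞`, `γ < 0` and a nonnegative `f ∈ L^p(ℝ, (1+e^x)^γ dx)`,
`liminf_{h → -∞} ‖f + τ_h f‖_{L^p((1+e^x)^γ dx)} ≥ 2^{1/p} ‖f‖_{L^p((1+e^x)^γ dx)}`,
where `τ_h f (x) = f (x - h)`. -/
theorem liminf_translate_weighted_norm (p γ : ℝ) (hp : 1 ≤ p) (hγ : γ < 0)
    (μ : Measure ℝ)
    (hμ : μ = volume.withDensity fun x => ENNReal.ofReal ((1 + Real.exp x) ^ γ))
    (f : ℝ → ℝ) (hf : MemLp f (ENNReal.ofReal p) μ) (hf0 : ∀ x, 0 ≤ f x) :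
    (2 : ℝ≥0∞) ^ (1 / p) * eLpNorm f (ENNReal.ofReal p) μ ≤
      liminf (fun h : ℝ => eLpNorm (fun x => f x + f (x - h)) (ENNReal.ofReal p) μ) atBot :=
  liminf_translate_weighted_norm_general p γ hp hγ μ hμ f hf0
end

section
/- Let 1 ≤ p < ∞ and f ∈ L^p(ℝ). Then lim_{h → ∞} ‖f + τ_h f‖_{L^p(ℝ)} = 2^{1/p} ‖f‖_{L^p(ℝ)}, where τ_h f(x) = f(x - h). -/
/-!
For each `h`, the map `u ↦ ‖u + τ_h u‖_p` on `L^p` is `2`-Lipschitz, so the set of `u` along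
which `‖u + τ_h u‖_p → 2^{1/p} ‖u‖_p` is closed. It contains every compactly supported `u`: once
`h ∉ supp u - supp u`, the supports of `u` and `τ_h u` are disjoint, so the `p`-th powers of their
norms add up to `2 ‖u‖_p^p`. Compactly supported functions are dense in `L^p` for `p < ∞`.
-/

open MeasureTheory Filter ENNReal Set Topology Function
open scoped Pointwise

section

variable {α E : Type*} [MeasurableSpace α] {μ : Measure α} [NormedAddCommGroup E]

theorem eLpNorm_add_rpow_of_disjoint_support {p : ℝ≥0∞} (hp0 : p ≠ 0) (hp : p ≠ ∞)
    {f g : α → E} (hf : AEStronglyMeasurable f μ) (hfg : Disjoint (support f) (support g)) :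
    eLpNorm (f + g) p μ ^ p.toReal = eLpNorm f p μ ^ p.toReal + eLpNorm g p μ ^ p.toReal := by
  have hp' : 0 < p.toReal := ENNReal.toReal_pos hp0 hp
  simp only [eLpNorm_eq_eLpNorm' hp0 hp, ← lintegral_rpow_enorm_eq_rpow_eLpNorm' hp']
  rw [← lintegral_add_left' (hf.enorm.pow_const _)]
  refine lintegral_congr fun x => ?_
  by_cases hx : f x = 0
  · simp [hx, zero_rpow_of_pos hp']
  · have hgx : g x = 0 := notMem_support.1 (disjoint_left.1 hfg hx)
    simp [hgx, zero_rpow_of_pos hp']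

theorem MeasureTheory.Lp.dense_setOf_hasCompactSupport [TopologicalSpace α] [NormalSpace α]
    [R1Space α] [WeaklyLocallyCompactSpace α] [BorelSpace α] [μ.Regular] [NormedSpace ℝ E]
    {p : ℝ≥0∞} [Fact (1 ≤ p)] (hp : p ≠ ∞) :
    Dense {u : Lp E p μ | ∃ (g : α → E) (hg : MemLp g p μ), HasCompactSupport g ∧ hg.toLp g = u} := by
  refine Metric.dense_iff.2 fun u r hr => ?_
  obtain ⟨g, hgs, hug, -, hg⟩ := (Lp.memLp u).exists_hasCompactSupport_eLpNorm_sub_le hp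
    (ε := ENNReal.ofReal (r / 2)) (by simpa using hr)
  refine ⟨hg.toLp g, ?_, g, hg, hgs, rfl⟩
  rw [Metric.mem_ball, dist_comm, Lp.dist_def, eLpNorm_congr_ae ((ae_eq_refl _).sub hg.coeFn_toLp)]
  exact (ENNReal.toReal_le_of_le_ofReal (by positivity) hug).trans_lt (half_lt_self hr)

end

section

variable {G E : Type*} [AddCommGroup G] [NormedAddCommGroup E]

theorem disjoint_support_comp_sub_right {g : G → E} {K : Set G} (hK : support g ⊆ K) {h : G}
    (hh : h ∉ K - K) : Disjoint (support g) (support fun x => g (x - h)) := by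
  refine disjoint_left.2 fun x hx hxh => hh ?_
  simpa only [_root_.sub_sub_cancel] using sub_mem_sub (hK hx) (hK (a := x - h) hxh)

variable [MeasurableSpace G] {μ : Measure G} {p : ℝ≥0∞}

section

variable [MeasurableAdd G] [μ.IsAddRightInvariant]

theorem eLpNorm_comp_sub_right {g : G → E} (hg : AEStronglyMeasurable g μ) (h : G) :
    eLpNorm (fun x => g (x - h)) p μ = eLpNorm g p μ :=
  eLpNorm_comp_measurePreserving hg (measurePreserving_sub_right μ h)

theorem MeasureTheory.MemLp.comp_sub_right {f : G → E} (hf : MemLp f p μ) (h : G) :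
    MemLp (fun x => f (x - h)) p μ :=
  hf.comp_measurePreserving (measurePreserving_sub_right μ h)

namespace MeasureTheory.Lp

noncomputable def translate (h : G) : Lp E p μ →+ Lp E p μ :=
  compMeasurePreserving (· - h) (measurePreserving_sub_right μ h)

theorem toLp_add_translate {f : G → E} (hf : MemLp f p μ) (h : G) :
    hf.toLp f + translate h (hf.toLp f) =
      (hf.add (hf.comp_sub_right h)).toLp fun x => f x + f (x - h) := by
  rw [translate, toLp_compMeasurePreserving, ← MemLp.toLp_add]
  rfl

theorem lipschitzWith_norm_add_translate [Fact (1 ≤ p)] (h : G) :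
    LipschitzWith 2 fun u : Lp E p μ => ‖u + translate h u‖ := by
  refine LipschitzWith.of_dist_le_mul fun u v => ?_
  calc dist ‖u + translate h u‖ ‖v + translate h v‖
      ≤ ‖(u - v) + translate h (u - v)‖ :=
        (dist_norm_norm_le _ _).trans_eq (by rw [map_sub]; abel_nf)
    _ ≤ ‖u - v‖ + ‖u - v‖ := by
        grw [norm_add_le]
        rw [translate, norm_compMeasurePreserving]
    _ = 2 * dist u v := by rw [_root_.dist_eq_norm, two_mul]

end MeasureTheory.Lp

end

variable [TopologicalSpace G] [IsTopologicalAddGroup G] [BorelSpace G] [μ.IsAddRightInvariant]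

theorem HasCompactSupport.eventually_eLpNorm_add_comp_sub_right {g : G → E}
    (hg : HasCompactSupport g) (hgm : AEStronglyMeasurable g μ) (hp0 : p ≠ 0) (hp : p ≠ ∞) :
    ∀ᶠ h in cocompact G,
      eLpNorm (fun x => g x + g (x - h)) p μ = 2 ^ p.toReal⁻¹ * eLpNorm g p μ := by
  have hp' : p.toReal ≠ 0 := (ENNReal.toReal_pos hp0 hp).ne'
  have hK : IsCompact (tsupport g - tsupport g) := by
    rw [← sub_image_prod]
    exact (hg.isCompact.prod hg.isCompact).image continuous_sub
  filter_upwards [hK.compl_mem_cocompact] with h hh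
  have hpow := eLpNorm_add_rpow_of_disjoint_support hp0 hp hgm
    (disjoint_support_comp_sub_right (subset_tsupport g) hh)
  rw [eLpNorm_comp_sub_right hgm, ← two_mul] at hpow
  change eLpNorm (g + fun x => g (x - h)) p μ = _
  rw [← ENNReal.rpow_rpow_inv hp' (eLpNorm _ p μ), hpow,
    ENNReal.mul_rpow_of_nonneg _ _ (inv_nonneg.2 ENNReal.toReal_nonneg), ENNReal.rpow_rpow_inv hp']

variable [NormalSpace G] [WeaklyLocallyCompactSpace G] [μ.Regular] [NormedSpace ℝ E]

theorem MeasureTheory.Lp.tendsto_norm_add_translate [Fact (1 ≤ p)] (hp : p ≠ ∞) (u : Lp E p μ) :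
    Tendsto (fun h => ‖u + translate h u‖) (cocompact G) (𝓝 (2 ^ p.toReal⁻¹ * ‖u‖)) := by
  have hp0 : p ≠ 0 := (one_pos.trans_le Fact.out).ne'
  refine (dense_setOf_hasCompactSupport hp).induction ?_
    ((LipschitzWith.uniformEquicontinuous _ 2 lipschitzWith_norm_add_translate).equicontinuous
      |>.isClosed_setOfPred_tendsto (by fun_prop)) u
  rintro _ ⟨g, hg, hgs, rfl⟩
  refine tendsto_const_nhds.congr' ?_
  filter_upwards [hgs.eventually_eLpNorm_add_comp_sub_right hg.1 hp0 hp] with h hh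
  rw [toLp_add_translate, norm_toLp, norm_toLp, hh, toReal_mul, ← toReal_rpow, toReal_ofNat]

theorem MeasureTheory.MemLp.tendsto_eLpNorm_add_comp_sub_right [Fact (1 ≤ p)] (hp : p ≠ ∞)
    {f : G → E} (hf : MemLp f p μ) :
    Tendsto (fun h => eLpNorm (fun x => f x + f (x - h)) p μ) (cocompact G)
      (𝓝 (2 ^ p.toReal⁻¹ * eLpNorm f p μ)) := by
  have := ENNReal.tendsto_ofReal (Lp.tendsto_norm_add_translate hp (hf.toLp f))
  simpa only [ofReal_mul (Real.rpow_nonneg zero_le_two _), ofReal_norm, Lp.toLp_add_translate,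
    Lp.enorm_toLp, ← ofReal_rpow_of_nonneg zero_le_two (inv_nonneg.2 toReal_nonneg),
    ofReal_ofNat] using this

end

/-- For `1 ≤ p < ∞` and `f ∈ L^p(ℝ)`,
`lim_{h → ∞} ‖f + τ_h f‖_{L^p(ℝ)} = 2^{1/p} ‖f‖_{L^p(ℝ)}`, where `τ_h f (x) = f (x - h)`. -/
theorem tendsto_translate_norm (p : ℝ) (hp : 1 ≤ p) (f : ℝ → ℝ)
    (hf : MemLp f (ENNReal.ofReal p) volume) :
    Tendsto (fun h : ℝ => eLpNorm (fun x => f x + f (x - h)) (ENNReal.ofReal p) volume)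
      atTop (nhds ((2 : ℝ≥0∞) ^ (1 / p) * eLpNorm f (ENNReal.ofReal p) volume)) := by
  have : Fact (1 ≤ ENNReal.ofReal p) := ⟨ENNReal.one_le_ofReal.2 hp⟩
  have hlim := hf.tendsto_eLpNorm_add_comp_sub_right ofReal_ne_top
  rw [toReal_ofReal (zero_le_one.trans hp), ← one_div] at hlim
  exact hlim.mono_left atTop_le_cocompact
end

section
/- Let 0 < b < 1, m > 0, α ∈ ℝ, and 0 < p < 2. Then the quotient H(a) = (∫_{a/b}^1 (1 - x²)^{-1/2} dx)^p / (∫_a^b (1 - x²)^{m/2 - 1} x^α dx) tends to +∞ as a → b⁻. -/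
/-!
With `t = a / b`, the integrand of the numerator is at least `(2 (1 - t))^{-1/2}` on `(t, 1)`, so
the numerator is at least `((b - a) / (2 b))^{p/2}`. The integrand of the denominator is bounded
on `[b/2, b]`, so the denominator is `O(b - a)`. Hence `H(a) ≳ (b - a)^{p/2 - 1}`, which blows up
because `p < 2`.
-/

open MeasureTheory Set Filter Topology

lemma tendsto_sub_rpow_nhdsLT_atTop {b r : ℝ} (hr : r < 0) :
    Tendsto (fun a : ℝ => (b - a) ^ r) (𝓝[<] b) atTop :=
  (tendsto_rpow_neg_nhdsGT_zero hr).comp <| by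
    have h := Filter.map_subLeft_nhdsLT (c := b) (a := b)
    rw [sub_self] at h
    exact h.le

lemma exists_setIntegral_Ioo_le_mul_sub {f : ℝ → ℝ} {c b : ℝ}
    (hf : ContinuousOn f (Icc c b)) :
    ∃ M > 0, ∀ a ∈ Icc c b, ∫ x in Ioo a b, f x ≤ M * (b - a) := by
  obtain ⟨C, hC⟩ := isCompact_Icc.exists_bound_of_continuousOn hf
  refine ⟨max C 1, by positivity, fun a ha => ?_⟩
  calc ∫ x in Ioo a b, f x ≤ ‖∫ x in Ioo a b, f x‖ := Real.le_norm_self _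
    _ ≤ max C 1 * volume.real (Ioo a b) :=
      norm_setIntegral_le_of_norm_le_const measure_Ioo_lt_top fun x hx =>
        (hC x (Ioo_subset_Icc_self.trans (Icc_subset_Icc_left ha.1) hx)).trans (le_max_left _ _)
    _ = max C 1 * (b - a) := by rw [Real.volume_real_Ioo_of_le ha.2]

lemma setIntegral_Ioo_pos_of_continuousOn {f : ℝ → ℝ} {a b : ℝ} (hab : a < b)
    (hf : ContinuousOn f (Icc a b)) (hpos : ∀ x ∈ Ioo a b, 0 < f x) :
    0 < ∫ x in Ioo a b, f x := by
  rw [← integral_Ioc_eq_integral_Ioo, ← intervalIntegral.integral_of_le hab.le]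
  exact intervalIntegral.intervalIntegral_pos_of_pos_on (hf.intervalIntegrable_of_Icc hab.le)
    hpos hab

lemma one_sub_sq_pos {x : ℝ} (hx : x ∈ Ioo 0 1) : 0 < 1 - x ^ 2 := by
  nlinarith [hx.1, hx.2]

lemma continuousOn_one_sub_sq_rpow_mul_rpow (β α : ℝ) :
    ContinuousOn (fun x : ℝ => (1 - x ^ 2) ^ β * x ^ α) (Ioo 0 1) :=
  ((continuousOn_const.sub (continuousOn_pow 2)).rpow_const fun _ hx =>
      Or.inl (one_sub_sq_pos hx).ne').mul
    (continuousOn_id.rpow_const fun _ hx => Or.inl hx.1.ne')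

lemma one_sub_sq_rpow_mul_rpow_pos (β α : ℝ) {x : ℝ} (hx : x ∈ Ioo 0 1) :
    0 < (1 - x ^ 2) ^ β * x ^ α :=
  mul_pos (Real.rpow_pos_of_pos (one_sub_sq_pos hx) _) (Real.rpow_pos_of_pos hx.1 _)

lemma integrableOn_one_sub_sq_rpow_neg_half :
    IntegrableOn (fun x : ℝ => (1 - x ^ 2) ^ (-(1 : ℝ) / 2)) (Ioo 0 1) := by
  have hdom : IntegrableOn (fun x : ℝ => (1 - x) ^ (-(1 : ℝ) / 2)) (Ioo 0 1) := by
    have h := (intervalIntegral.intervalIntegrable_rpow' (a := 0) (b := 1)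
      (r := -(1 : ℝ) / 2) (by norm_num)).comp_sub_left 1
    simp only [sub_zero, sub_self] at h
    exact ((intervalIntegrable_iff_integrableOn_Ioc_of_le zero_le_one).mp h.symm).mono_set
      Ioo_subset_Ioc_self
  refine Integrable.mono hdom ?_ ?_
  · exact ((continuousOn_const.sub (continuousOn_pow 2)).rpow_const fun _ hx =>
      Or.inl (one_sub_sq_pos hx).ne').aestronglyMeasurable measurableSet_Ioo
  · filter_upwards [ae_restrict_mem measurableSet_Ioo] with x hx
    have h1x : 0 < 1 - x := by linarith [hx.2]
    rw [Real.norm_of_nonneg (Real.rpow_nonneg (one_sub_sq_pos hx).le _),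
      Real.norm_of_nonneg (Real.rpow_nonneg h1x.le _)]
    exact Real.rpow_le_rpow_of_nonpos h1x (by nlinarith [hx.1, hx.2]) (by norm_num)

lemma half_one_sub_rpow_half_le_integral {t : ℝ} (ht0 : 0 ≤ t) (ht1 : t < 1) :
    ((1 - t) / 2) ^ (1 / 2 : ℝ) ≤ ∫ x in Ioo t 1, (1 - x ^ 2) ^ (-(1 : ℝ) / 2) := by
  have h1t : 0 < 1 - t := by linarith
  -- on `(t, 1)` we have `1 - x ^ 2 = (1 - x) (1 + x) ≤ 2 (1 - t)`
  have hmono : ∫ _ in Ioo t 1, (2 * (1 - t)) ^ (-(1 : ℝ) / 2) ≤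
      ∫ x in Ioo t 1, (1 - x ^ 2) ^ (-(1 : ℝ) / 2) := by
    refine setIntegral_mono_on (integrableOn_const measure_Ioo_lt_top.ne)
      (integrableOn_one_sub_sq_rpow_neg_half.mono_set (Ioo_subset_Ioo_left ht0))
      measurableSet_Ioo fun x hx => ?_
    have hx' : x ∈ Ioo 0 1 := ⟨ht0.trans_lt hx.1, hx.2⟩
    exact Real.rpow_le_rpow_of_nonpos (one_sub_sq_pos hx') (by nlinarith [hx.1, hx.2])
      (by norm_num)
  calc ((1 - t) / 2) ^ (1 / 2 : ℝ) = (1 - t) * (2 * (1 - t)) ^ (-(1 : ℝ) / 2) := by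
        rw [Real.div_rpow h1t.le zero_le_two, Real.mul_rpow zero_le_two h1t.le,
          show (1 / 2 : ℝ) = 1 + -(1 : ℝ) / 2 by norm_num, Real.rpow_add h1t, Real.rpow_one,
          Real.rpow_add two_pos, Real.rpow_one]
        field_simp
        rw [← Real.rpow_natCast, ← Real.rpow_mul zero_le_two]
        norm_num
    _ = ∫ _ in Ioo t 1, (2 * (1 - t)) ^ (-(1 : ℝ) / 2) := by
        rw [setIntegral_const, Real.volume_real_Ioo_of_le ht1.le, smul_eq_mul]
    _ ≤ _ := hmono

lemma rpow_le_integral_one_sub_sq_rpow_neg_half_rpow {a b p : ℝ} (ha : 0 ≤ a) (hab : a < b)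
    (hp : 0 ≤ p) :
    (2 * b) ^ (-(p / 2)) * (b - a) ^ (p / 2) ≤
      (∫ x in Ioo (a / b) 1, (1 - x ^ 2) ^ (-(1 : ℝ) / 2)) ^ p := by
  have hb : 0 < b := ha.trans_lt hab
  have hab' : 0 ≤ b - a := by linarith
  have hdiv : (1 - a / b) / 2 = (b - a) / (2 * b) := by field_simp
  have hbase : 0 ≤ (1 - a / b) / 2 := hdiv ▸ by positivity
  calc (2 * b) ^ (-(p / 2)) * (b - a) ^ (p / 2) = (((1 - a / b) / 2) ^ (1 / 2 : ℝ)) ^ p := by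
        rw [← Real.rpow_mul hbase, Real.rpow_neg (by positivity), hdiv,
          Real.div_rpow hab' (by positivity)]
        ring_nf
    _ ≤ _ := Real.rpow_le_rpow (by positivity)
        (half_one_sub_rpow_half_le_integral (div_nonneg ha hb.le) ((div_lt_one hb).2 hab)) hp

theorem tendsto_sphere_annulus_quotient_atTop_general (b m α p : ℝ) (hb0 : 0 < b) (hb1 : b < 1)
    (hp0 : 0 < p) (hp2 : p < 2) :
    Tendsto (fun a : ℝ =>
        (∫ x in Ioo (a / b) 1, (1 - x ^ 2) ^ (-(1 : ℝ) / 2)) ^ p /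
          ∫ x in Ioo a b, (1 - x ^ 2) ^ (m / 2 - 1) * x ^ α)
      (nhdsWithin b (Set.Iio b)) atTop := by
  have hweight := continuousOn_one_sub_sq_rpow_mul_rpow (m / 2 - 1) α
  obtain ⟨M, hM, hD⟩ := exists_setIntegral_Ioo_le_mul_sub
    (hweight.mono (Icc_subset_Ioo (half_pos hb0) hb1))
  have hlower : ∀ᶠ a in 𝓝[<] b, (2 * b) ^ (-(p / 2)) / M * (b - a) ^ (p / 2 - 1) ≤
      (∫ x in Ioo (a / b) 1, (1 - x ^ 2) ^ (-(1 : ℝ) / 2)) ^ p /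
        ∫ x in Ioo a b, (1 - x ^ 2) ^ (m / 2 - 1) * x ^ α := by
    filter_upwards [Ioo_mem_nhdsLT (half_lt_self hb0)] with a ⟨hca, hab⟩
    have ha : 0 < a := (half_pos hb0).trans hca
    have hDpos := setIntegral_Ioo_pos_of_continuousOn hab
      (hweight.mono (Icc_subset_Ioo ha hb1))
      fun x hx => one_sub_sq_rpow_mul_rpow_pos _ _ ⟨ha.trans hx.1, hx.2.trans hb1⟩
    have hnum := rpow_le_integral_one_sub_sq_rpow_neg_half_rpow ha.le hab hp0.le
    calc (2 * b) ^ (-(p / 2)) / M * (b - a) ^ (p / 2 - 1)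
        = (2 * b) ^ (-(p / 2)) * (b - a) ^ (p / 2) / (M * (b - a)) := by
          rw [Real.rpow_sub_one (sub_pos.2 hab).ne']
          field_simp
      _ ≤ _ :=
          div_le_div₀ (le_trans (by positivity) hnum) hnum hDpos (hD a ⟨hca.le, hab.le⟩)
  exact tendsto_atTop_mono' _ hlower
    ((tendsto_sub_rpow_nhdsLT_atTop (by linarith)).const_mul_atTop (by positivity))

/-- For `0 < b < 1`, `m > 0`, `α ∈ ℝ` and `0 < p < 2`, the quotient
`H(a) = (∫_{a/b}^1 (1-x²)^{-1/2} dx)^p / ∫_a^b (1-x²)^{m/2-1} x^α dx`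
tends to `+∞` as `a → b⁻`. -/
theorem tendsto_sphere_annulus_quotient_atTop (b m α p : ℝ) (hb0 : 0 < b) (hb1 : b < 1)
    (hm : 0 < m) (hp0 : 0 < p) (hp2 : p < 2) :
    Tendsto (fun a : ℝ =>
        (∫ x in Ioo (a / b) 1, (1 - x ^ 2) ^ (-(1 : ℝ) / 2)) ^ p /
          ∫ x in Ioo a b, (1 - x ^ 2) ^ (m / 2 - 1) * x ^ α)
      (nhdsWithin b (Set.Iio b)) atTop :=
  tendsto_sphere_annulus_quotient_atTop_general b m α p hb0 hb1 hp0 hp2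
end

section
/- Let 1 < γ ≤ 3/2 and define ψ : (0, ∞) → [0, ∞) by ψ(x) = x^{-1} (log(1/x))^{-γ} for 0 < x < 1/8 and ψ(x) = 0 otherwise. Then ∫₀^∞ ψ(x) dx < ∞, but ∫₀^∞ (∫₀^x ψ(t) (x - t)^{-1/2} dt)² dx = ∞. -/
/-!
Substituting `x = exp (-u)` turns `∫₀^b x⁻¹ (-log x)^s dx` into `∫_{-log b}^∞ u^s du`, which is
finite exactly when `s < -1`; with `s = -γ` this is the integrability of `ψ`. For the divergence,
restrict the inner integral to `t ∈ (x², x/2)`, where `(x - t)^{-1/2} ≥ x^{-1/2}` and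
`-log t ≤ 2 (-log x)`: this gives `I^{1/2}ψ(x) ≳ x^{-1/2} (-log x)^{1-γ}`, whose square dominates
`x⁻¹ (-log x)⁻¹` because `γ ≤ 3/2`, and that is the divergent case `s = -1`.
-/

open MeasureTheory Set ENNReal

theorem lintegral_Ioo_zero_inv_mul_neg_log_rpow {b : ℝ} (hb : 0 < b) (s : ℝ) :
    ∫⁻ x in Ioo 0 b, ENNReal.ofReal (x⁻¹ * (-Real.log x) ^ s) =
      ∫⁻ u in Ioi (-Real.log b), ENNReal.ofReal (u ^ s) := by
  have himage : (fun u => Real.exp (-u)) '' Ioi (-Real.log b) = Ioo 0 b := by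
    rw [show (fun u => Real.exp (-u)) = Real.exp ∘ Neg.neg from rfl, image_comp, image_neg_Ioi,
      neg_neg, Real.image_exp_Iio, Real.exp_log hb]
  rw [← himage, lintegral_image_eq_lintegral_abs_deriv_mul measurableSet_Ioi
    (fun u _ => ((hasDerivAt_neg u).exp).hasDerivWithinAt)
    ((Real.exp_injective.comp neg_injective).injOn)]
  refine setLIntegral_congr_fun measurableSet_Ioi fun u _ => ?_
  rw [Real.log_exp, neg_neg, ← ENNReal.ofReal_mul (abs_nonneg _), ← mul_assoc]
  simp [(Real.exp_pos _).ne']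

theorem lintegral_Ioo_zero_inv_mul_neg_log_rpow_lt_top {b s : ℝ} (hb₀ : 0 < b) (hb₁ : b < 1)
    (hs : s < -1) : ∫⁻ x in Ioo 0 b, ENNReal.ofReal (x⁻¹ * (-Real.log x) ^ s) < ⊤ := by
  rw [lintegral_Ioo_zero_inv_mul_neg_log_rpow hb₀]
  exact (integrableOn_Ioi_rpow_of_lt hs (neg_pos.2 (Real.log_neg hb₀ hb₁))).lintegral_lt_top

theorem lintegral_Ioo_zero_inv_mul_neg_log_rpow_eq_top {b s : ℝ} (hb₀ : 0 < b) (hb₁ : b < 1)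
    (hs : -1 ≤ s) : ∫⁻ x in Ioo 0 b, ENNReal.ofReal (x⁻¹ * (-Real.log x) ^ s) = ⊤ := by
  have hc : 0 < -Real.log b := neg_pos.2 (Real.log_neg hb₀ hb₁)
  rw [lintegral_Ioo_zero_inv_mul_neg_log_rpow hb₀]
  by_contra h
  have hnonneg : 0 ≤ᵐ[volume.restrict (Ioi (-Real.log b))] fun u : ℝ => u ^ s :=
    (ae_restrict_iff' measurableSet_Ioi).2
      (ae_of_all _ fun u hu => Real.rpow_nonneg (hc.trans hu).le s)
  have hint := (lintegral_ofReal_ne_top_iff_integrable (by fun_prop) hnonneg).1 h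
  exact (integrableOn_Ioi_rpow_iff hc).1 hint |>.not_ge hs

theorem lintegral_Ioo_ofReal_inv {a b : ℝ} (ha : 0 < a) (hab : a ≤ b) :
    ∫⁻ t in Ioo a b, ENNReal.ofReal t⁻¹ = ENNReal.ofReal (Real.log (b / a)) := by
  have hint : IntegrableOn (fun t : ℝ => t⁻¹) (Ioo a b) :=
    ((continuousOn_inv₀.mono fun t ht => (ha.trans_le ht.1).ne').integrableOn_Icc).mono_set
      Ioo_subset_Icc_self
  have hnonneg : 0 ≤ᵐ[volume.restrict (Ioo a b)] fun t : ℝ => t⁻¹ :=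
    (ae_restrict_iff' measurableSet_Ioo).2
      (ae_of_all _ fun t ht => inv_nonneg.2 (ha.trans ht.1).le)
  rw [← ofReal_integral_eq_lintegral_ofReal hint hnonneg, ← integral_Ioc_eq_integral_Ioo,
    ← intervalIntegral.integral_of_le hab, integral_inv_of_pos ha (ha.trans_le hab)]

theorem le_lintegral_Ioo_inv_mul_neg_log_rpow_mul_sub_rpow {γ x : ℝ} (hγ : 0 ≤ γ) (hx₀ : 0 < x)
    (hx : x ≤ 1 / 2) :
    ENNReal.ofReal (x ^ (-(1:ℝ) / 2) * (2 * -Real.log x) ^ (-γ) * Real.log (1 / (2 * x))) ≤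
      ∫⁻ t in Ioo 0 x, ENNReal.ofReal (t⁻¹ * (-Real.log t) ^ (-γ) * (x - t) ^ (-(1:ℝ) / 2)) := by
  set c := x ^ (-(1:ℝ) / 2) * (2 * -Real.log x) ^ (-γ)
  have hlog_x : 0 < -Real.log x := neg_pos.2 (Real.log_neg hx₀ (by linarith))
  have hc : 0 ≤ c := by positivity
  have hsq : 0 < x ^ 2 := by positivity
  have hbound : ∀ t ∈ Ioo (x ^ 2) (x / 2),
      c * t⁻¹ ≤ t⁻¹ * (-Real.log t) ^ (-γ) * (x - t) ^ (-(1:ℝ) / 2) := by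
    rintro t ⟨ht₁, ht₂⟩
    have ht₀ : 0 < t := hsq.trans ht₁
    have hlog_t : 0 < -Real.log t := neg_pos.2 (Real.log_neg ht₀ (by linarith))
    have hlog_le : -Real.log t ≤ 2 * -Real.log x := by
      have := Real.log_lt_log hsq ht₁
      rw [Real.log_pow] at this
      push_cast at this
      linarith
    have hsub : x ^ (-(1:ℝ) / 2) ≤ (x - t) ^ (-(1:ℝ) / 2) :=
      Real.rpow_le_rpow_of_nonpos (by linarith) (by linarith) (by norm_num)
    have hlog : (2 * -Real.log x) ^ (-γ) ≤ (-Real.log t) ^ (-γ) :=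
      Real.rpow_le_rpow_of_nonpos hlog_t hlog_le (neg_nonpos.2 hγ)
    calc c * t⁻¹ = t⁻¹ * (2 * -Real.log x) ^ (-γ) * x ^ (-(1:ℝ) / 2) := by ring
      _ ≤ _ := by gcongr
  calc ENNReal.ofReal (c * Real.log (1 / (2 * x)))
      = ENNReal.ofReal c * ∫⁻ t in Ioo (x ^ 2) (x / 2), ENNReal.ofReal t⁻¹ := by
        rw [lintegral_Ioo_ofReal_inv hsq (by nlinarith), ← ENNReal.ofReal_mul hc]
        congr 3
        field_simp
    _ = ∫⁻ t in Ioo (x ^ 2) (x / 2), ENNReal.ofReal (c * t⁻¹) := by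
        rw [← lintegral_const_mul' _ _ ENNReal.ofReal_ne_top]
        simp_rw [ENNReal.ofReal_mul hc]
    _ ≤ ∫⁻ t in Ioo (x ^ 2) (x / 2),
          ENNReal.ofReal (t⁻¹ * (-Real.log t) ^ (-γ) * (x - t) ^ (-(1:ℝ) / 2)) :=
        setLIntegral_mono' measurableSet_Ioo fun t ht => ENNReal.ofReal_le_ofReal (hbound t ht)
    _ ≤ _ := lintegral_mono_set (Ioo_subset_Ioo hsq.le (by linarith))

theorem ofReal_inv_mul_neg_log_div_le_sq {γ x : ℝ} (hγ : γ ≤ 3 / 2) (hx₀ : 0 < x)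
    (hx : x ≤ 1 / 8) :
    ENNReal.ofReal (x⁻¹ * (-Real.log x) ^ (-1:ℝ)) / 32 ≤
      ENNReal.ofReal (x ^ (-(1:ℝ) / 2) * (2 * -Real.log x) ^ (-γ) * Real.log (1 / (2 * x))) ^ 2 :=
    by
  set L := -Real.log x
  have hL : 3 * Real.log 2 ≤ L := by
    have := Real.log_le_log hx₀ hx
    rw [show (1:ℝ) / 8 = (2 ^ 3)⁻¹ by norm_num, Real.log_inv, Real.log_pow] at this
    push_cast at this
    linarith
  have hlog2 := Real.log_two_gt_d9
  have hL₀ : 0 < L := by linarith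
  have hhalf : L / 2 ≤ Real.log (1 / (2 * x)) := by
    rw [one_div, Real.log_inv, Real.log_mul two_ne_zero hx₀.ne']
    linarith
  have hpow : (2 * L) ^ (-(3:ℝ) / 2) ≤ (2 * L) ^ (-γ) :=
    Real.rpow_le_rpow_of_exponent_le (by linarith) (by linarith)
  have hsq :
      (x ^ (-(1:ℝ) / 2) * (2 * L) ^ (-(3:ℝ) / 2) * (L / 2)) ^ 2 = x⁻¹ * L ^ (-1:ℝ) / 32 := by
    rw [mul_pow, mul_pow, ← Real.rpow_mul_natCast hx₀.le, ← Real.rpow_mul_natCast (by positivity)]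
    norm_num [Real.rpow_neg_one, Real.rpow_neg (by positivity : (0:ℝ) ≤ 2 * L)]
    field_simp
    ring
  rw [← ENNReal.ofReal_pow (mul_nonneg (by positivity) (by linarith)),
    ← ENNReal.ofReal_ofNat 32, ← ENNReal.ofReal_div_of_pos (by norm_num), ← hsq]
  gcongr

/-- For `1 < γ ≤ 3/2` and `ψ(x) = x⁻¹ (log (1/x))^{-γ}` on `(0, 1/8)` (and `0` elsewhere),
`ψ` is integrable on `(0, ∞)` but the square of its half-order Riemann–Liouville
fractional integral `I^{1/2}ψ(x) = ∫₀^x ψ(t) (x-t)^{-1/2} dt` is not. -/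
theorem fractional_integral_half_not_L1_to_L2 (γ : ℝ) (hγ1 : 1 < γ) (hγ2 : γ ≤ 3 / 2)
    (ψ : ℝ → ℝ)
    (hψ : ψ = fun x => if 0 < x ∧ x < 1 / 8 then x⁻¹ * Real.log (1 / x) ^ (-γ) else 0) :
    (∫⁻ x in Ioi (0 : ℝ), ENNReal.ofReal (ψ x)) < ⊤ ∧
    (∫⁻ x in Ioi (0 : ℝ),
        (∫⁻ t in Ioo (0 : ℝ) x, ENNReal.ofReal (ψ t * (x - t) ^ (-(1 : ℝ) / 2))) ^ 2) = ⊤ := by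
  have hψ_of_mem : ∀ t ∈ Ioo (0 : ℝ) (1 / 8), ψ t = t⁻¹ * (-Real.log t) ^ (-γ) := fun t ht => by
    simp only [hψ]
    rw [if_pos (show 0 < t ∧ t < 1 / 8 from ht), one_div, Real.log_inv]
  have hψ_support : (fun x => ENNReal.ofReal (ψ x)).support ⊆ Ioo 0 (1 / 8) := fun x hx => by
    by_contra h
    exact hx (by simp only [hψ, if_neg (show ¬(0 < x ∧ x < 1 / 8) from h), ENNReal.ofReal_zero])
  constructor
  · calc ∫⁻ x in Ioi 0, ENNReal.ofReal (ψ x)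
        ≤ ∫⁻ x in Ioo 0 (1 / 8), ENNReal.ofReal (ψ x) := by
          rw [setLIntegral_eq_of_support_subset hψ_support]
          exact setLIntegral_le_lintegral _ _
      _ = ∫⁻ x in Ioo 0 (1 / 8), ENNReal.ofReal (x⁻¹ * (-Real.log x) ^ (-γ)) :=
          setLIntegral_congr_fun measurableSet_Ioo fun x hx => by rw [hψ_of_mem x hx]
      _ < ⊤ := lintegral_Ioo_zero_inv_mul_neg_log_rpow_lt_top (by norm_num) (by norm_num)
          (by linarith)
  · refine eq_top_iff.2 ?_
    calc ⊤ = ∫⁻ x in Ioo 0 (1 / 8), ENNReal.ofReal (x⁻¹ * (-Real.log x) ^ (-1 : ℝ)) / 32 := by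
          simp_rw [div_eq_mul_inv]
          rw [lintegral_mul_const' _ _ (by norm_num),
            lintegral_Ioo_zero_inv_mul_neg_log_rpow_eq_top (by norm_num) (by norm_num) le_rfl,
            top_mul (by norm_num)]
      _ ≤ ∫⁻ x in Ioo 0 (1 / 8),
            (∫⁻ t in Ioo 0 x, ENNReal.ofReal (ψ t * (x - t) ^ (-(1 : ℝ) / 2))) ^ 2 := by
          refine setLIntegral_mono' measurableSet_Ioo fun x hx => ?_
          rw [setLIntegral_congr_fun measurableSet_Ioo fun t ht => by
            rw [hψ_of_mem t ⟨ht.1, ht.2.trans hx.2⟩]]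
          exact (ofReal_inv_mul_neg_log_div_le_sq hγ2 hx.1 hx.2.le).trans <| pow_le_pow_left'
            (le_lintegral_Ioo_inv_mul_neg_log_rpow_mul_sub_rpow (by linarith) hx.1
              (by linarith [hx.2])) 2
      _ ≤ _ := lintegral_mono_set Ioo_subset_Ioi_self
end
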